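/- arXiv:2102.09277 — 9 statements merged into one kernel-verified Lean document; each statement's English description precedes it below -/
import Mathlib

section
/- Let p ≥ 1 be an integer and let G be a finite rooted tree (a rooted forest with exactly one root) with n ≥ 1 vertices. Then at least one of the following holds: the number of leaves of G is at least n/(6p), or the number of vertices in longpaths(G, p) is at least n/3. -/
open Function

/-- A finite rooted forest: for every vertex, iterating the parent function
eventually stabilizes (reaches a root, i.e. a fixed point of `par`). -/
def IsForest {V : Type*} (par : V → V) : Prop :=
  ∀ v : V, ∃ m : ℕ, par^[m + 1] v = par^[m] v

/-- The leaves: vertices with no children. -/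
def leaves {V : Type*} (par : V → V) : Set V :=
  {v | ∀ u, par u = v → u = v}

/-- A vertex has exactly one child. -/
def hasOneChild {V : Type*} (par : V → V) (v : V) : Prop :=
  ∃! u, u ≠ v ∧ par u = v

/-- Adjacency (parent/child relation) restricted to the subset `S`. -/
def adjOn {V : Type*} (par : V → V) (S : Set V) (u v : V) : Prop :=
  u ∈ S ∧ v ∈ S ∧ u ≠ v ∧ (par u = v ∨ par v = u)

/-- `longpaths par p`: vertices having exactly one child that lie in a connected
component of size at least `p` of the graph induced on the vertices having
exactly one child. -/
def longpaths {V : Type*} (par : V → V) (p : ℕ) : Set V :=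
  {v | hasOneChild par v ∧
    p ≤ {u | Relation.ReflTransGen (adjOn par {w | hasOneChild par w}) v u}.ncard}

/-!
Call a vertex *branching* if it does not have exactly one child. Since children sets are
disjoint, the number of children summed over all vertices is at most `n`, so there are at most as
many vertices with two or more children as there are leaves, and hence at most twice as many
branching vertices as leaves. Following the unique child from a one-child vertex `v` we reach
a branching vertex after `k ≥ 1` steps (the depth grows by one at each step, so the descent
terminates and visits distinct vertices), and `v` is recovered from that vertex and `k`. If `v`
is not in `longpaths p`, all vertices passed on the way lie in the component of `v`, so `k < p`.
Hence at most `(p - 1)` times as many one-child vertices outside `longpaths p` as branching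
vertices, and `n ≤ 2p · #leaves + #longpaths`.
-/

open Function Finset

section

variable {V : Type*} {par : V → V}

theorem card_filter_ne_one_le_two_mul {ι : Type*} [Fintype ι] (c : ι → ℕ)
    (hc : ∑ i, c i ≤ Fintype.card ι) : #{i | c i ≠ 1} ≤ 2 * #{i | c i = 0} := by
  have hpt : ∀ i, (if c i ≠ 1 then 1 else 0) + 1 ≤ c i + 2 * (if c i = 0 then 1 else 0) := by
    intro i
    split_ifs <;> omega
  have hsum := Finset.sum_le_sum fun i (_ : i ∈ univ) => hpt i
  simp only [sum_add_distrib, ← mul_sum, ← card_filter, sum_const, card_univ, smul_eq_mul,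
    mul_one] at hsum
  omega

section Children

variable [Fintype V] [DecidableEq V]

def children (par : V → V) (v : V) : Finset V := {u | u ≠ v ∧ par u = v}

theorem hasOneChild_iff_card_children {v : V} : hasOneChild par v ↔ #(children par v) = 1 := by
  simp only [hasOneChild, card_eq_one, Finset.ext_iff, children, mem_filter, mem_univ, true_and,
    mem_singleton]
  exact ⟨fun ⟨u, hu, huniq⟩ => ⟨u, fun w => ⟨huniq w, fun h => h ▸ hu⟩⟩,
    fun ⟨u, hu⟩ => ⟨u, (hu u).2 rfl, fun w => (hu w).1⟩⟩

theorem mem_leaves_iff_card_children {v : V} : v ∈ leaves par ↔ #(children par v) = 0 := by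
  simp only [leaves, Set.mem_ofPred_eq, card_eq_zero, eq_empty_iff_forall_notMem, children,
    mem_filter, mem_univ, true_and, not_and]
  exact forall_congr' fun u => ⟨fun h hne hu => hne (h hu), fun h hu => not_not.1 (h · hu)⟩

theorem sum_card_children_le : ∑ v, #(children par v) ≤ Fintype.card V := by
  rw [← card_univ,
    card_eq_sum_card_fiberwise (f := par) (t := univ) fun _ _ => mem_coe.2 (mem_univ _)]
  exact sum_le_sum fun v _ => card_le_card fun u hu => by simp_all [children]

end Children

theorem ncard_compl_hasOneChild_le [Finite V] :
    {v | hasOneChild par v}ᶜ.ncard ≤ 2 * (leaves par).ncard := by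
  classical
  have := Fintype.ofFinite V
  have hbranch : {v | hasOneChild par v}ᶜ = ↑({v | #(children par v) ≠ 1} : Finset V) := by
    ext v
    simp [hasOneChild_iff_card_children]
  have hleaves : leaves par = ↑({v | #(children par v) = 0} : Finset V) := by
    ext v
    simp [mem_leaves_iff_card_children]
  rw [hbranch, hleaves, Set.ncard_coe_finset, Set.ncard_coe_finset]
  exact card_filter_ne_one_le_two_mul _ sum_card_children_le

open scoped Classical in
noncomputable def child (par : V → V) (v : V) : V :=
  if h : hasOneChild par v then h.exists.choose else v

theorem hasOneChild.child_ne_self {v : V} (h : hasOneChild par v) : child par v ≠ v := by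
  rw [child, dif_pos h]
  exact h.exists.choose_spec.1

theorem hasOneChild.par_child {v : V} (h : hasOneChild par v) : par (child par v) = v := by
  rw [child, dif_pos h]
  exact h.exists.choose_spec.2

theorem par_iterate_child_iterate {v : V} {t : ℕ}
    (h : ∀ i < t, hasOneChild par ((child par)^[i] v)) : par^[t] ((child par)^[t] v) = v := by
  induction t with
  | zero => rfl
  | succ t ih =>
    rw [iterate_succ_apply' (child par), iterate_succ_apply, (h t t.lt_succ_self).par_child]
    exact ih fun i hi => h i (hi.trans t.lt_succ_self)

theorem reflTransGen_adjOn_child_iterate {v : V} {t : ℕ}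
    (h : ∀ i < t, hasOneChild par ((child par)^[i] v)) {i : ℕ} (hi : i < t) :
    Relation.ReflTransGen (adjOn par {w | hasOneChild par w}) v ((child par)^[i] v) := by
  induction i with
  | zero => exact .refl
  | succ i ih =>
    have hprev := h i (by omega)
    refine (ih (by omega)).tail ⟨hprev, h (i + 1) hi, ?_, .inr ?_⟩ <;>
      rw [iterate_succ_apply']
    exacts [hprev.child_ne_self.symm, hprev.par_child]

namespace IsForest

noncomputable def depth (hf : IsForest par) (v : V) : ℕ := by
  classical
  exact Nat.find (hf v)

theorem depth_eq_depth_par_add_one (hf : IsForest par) {u : V} (hu : par u ≠ u) :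
    hf.depth u = hf.depth (par u) + 1 := by
  classical
  simp only [depth]
  exact Nat.find_comp_succ (hf u) (hf (par u)) hu

theorem depth_child_iterate (hf : IsForest par) {v : V} {t : ℕ}
    (h : ∀ i < t, hasOneChild par ((child par)^[i] v)) :
    hf.depth ((child par)^[t] v) = hf.depth v + t := by
  induction t with
  | zero => rfl
  | succ t ih =>
    have hlast := h t t.lt_succ_self
    have hne : par (child par ((child par)^[t] v)) ≠ child par ((child par)^[t] v) := by
      rw [hlast.par_child]
      exact hlast.child_ne_self.symm
    rw [iterate_succ_apply', hf.depth_eq_depth_par_add_one hne, hlast.par_child,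
      ih fun i hi => h i (hi.trans t.lt_succ_self), add_assoc]

theorem exists_not_hasOneChild_child_iterate [Finite V] (hf : IsForest par) (v : V) :
    ∃ k, ¬ hasOneChild par ((child par)^[k] v) := by
  obtain ⟨M, hM⟩ := (Set.finite_range hf.depth).bddAbove
  by_contra! hall
  have hdeep := hM ⟨(child par)^[M + 1] v, rfl⟩
  rw [hf.depth_child_iterate fun i _ => hall i] at hdeep
  omega

noncomputable def descentLength [Finite V] (hf : IsForest par) (v : V) : ℕ := by
  classical
  exact Nat.find (hf.exists_not_hasOneChild_child_iterate v)

variable [Finite V] (hf : IsForest par)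

theorem hasOneChild_child_iterate_of_lt {v : V} {i : ℕ} (hi : i < hf.descentLength v) :
    hasOneChild par ((child par)^[i] v) := by
  classical
  exact not_not.1 (Nat.find_min (hf.exists_not_hasOneChild_child_iterate v) hi)

theorem not_hasOneChild_child_iterate_descentLength (v : V) :
    ¬ hasOneChild par ((child par)^[hf.descentLength v] v) := by
  classical
  exact Nat.find_spec (hf.exists_not_hasOneChild_child_iterate v)

theorem descentLength_pos {v : V} (hv : hasOneChild par v) : 0 < hf.descentLength v := by
  classical
  exact (Nat.find_pos _).2 (not_not.2 hv)

theorem par_iterate_descentLength (v : V) :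
    par^[hf.descentLength v] ((child par)^[hf.descentLength v] v) = v :=
  par_iterate_child_iterate fun _ => hf.hasOneChild_child_iterate_of_lt

theorem descentLength_le_ncard_component (v : V) :
    hf.descentLength v ≤
      {u | Relation.ReflTransGen (adjOn par {w | hasOneChild par w}) v u}.ncard := by
  have hchain {i} (hi : i < hf.descentLength v) := hf.hasOneChild_child_iterate_of_lt hi
  rw [← Set.ncard_Iio_nat (hf.descentLength v)]
  refine Set.ncard_le_ncard_of_injOn (fun i => (child par)^[i] v)
    (fun i hi => reflTransGen_adjOn_child_iterate (fun _ => hchain) hi) fun i hi j hj hij => ?_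
  have hdepth := congrArg hf.depth hij
  simp only at hdepth
  rwa [hf.depth_child_iterate fun k hk => hchain (hk.trans hi),
    hf.depth_child_iterate fun k hk => hchain (hk.trans hj), Nat.add_left_cancel_iff] at hdepth

end IsForest

theorem IsForest.ncard_sdiff_longpaths_le [Finite V] (hf : IsForest par) (p : ℕ) :
    ({v | hasOneChild par v} \ longpaths par p).ncard ≤
      {v | hasOneChild par v}ᶜ.ncard * (p - 1) := by
  rw [← Set.ncard_Iio_nat (p - 1), ← Set.ncard_prod]
  refine Set.ncard_le_ncard_of_injOn
    (fun v => ((child par)^[hf.descentLength v] v, hf.descentLength v - 1)) ?_ ?_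
  · rintro v ⟨hv, hlong⟩
    have hsmall : hf.descentLength v < p :=
      (hf.descentLength_le_ncard_component v).trans_lt (not_le.1 fun h => hlong ⟨hv, h⟩)
    have := hf.descentLength_pos hv
    exact ⟨hf.not_hasOneChild_child_iterate_descentLength v, by simp only [Set.mem_Iio]; omega⟩
  · rintro v ⟨hv, -⟩ w ⟨hw, -⟩ hvw
    simp only [Prod.mk.injEq] at hvw
    have hlen : hf.descentLength v = hf.descentLength w := by
      have := hf.descentLength_pos hv
      have := hf.descentLength_pos hw
      omega
    rw [← hf.par_iterate_descentLength v, ← hf.par_iterate_descentLength w, hvw.1, hlen]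

theorem IsForest.card_le_two_mul_mul_ncard_leaves_add_ncard_longpaths [Fintype V]
    (hf : IsForest par) {p : ℕ} (hp : 1 ≤ p) :
    Fintype.card V ≤ 2 * p * (leaves par).ncard + (longpaths par p).ncard := by
  have hsplit := Set.ncard_add_ncard_compl {v | hasOneChild par v}
  have hone := Set.ncard_le_ncard_sdiff_add_ncard {v | hasOneChild par v} (longpaths par p)
  have hshort := hf.ncard_sdiff_longpaths_le p
  have hbranch := ncard_compl_hasOneChild_le (par := par)
  obtain ⟨q, rfl⟩ := Nat.exists_eq_add_of_le hp
  rw [Nat.card_eq_fintype_card] at hsplit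
  rw [Nat.add_sub_cancel_left] at hshort
  nlinarith

end

theorem stmt0_general {V : Type*} [Fintype V] (p : ℕ) (hp : 1 ≤ p)
    (par : V → V) (hforest : IsForest par)
    (n : ℕ) (hn : n = Fintype.card V) :
    (n : ℝ) / (6 * p) ≤ ((leaves par).ncard : ℝ) ∨
      (n : ℝ) / 3 ≤ ((longpaths par p).ncard : ℝ) := by
  have hbound : (n : ℝ) ≤ 2 * p * (leaves par).ncard + (longpaths par p).ncard := by
    rw [hn]
    exact_mod_cast hforest.card_le_two_mul_mul_ncard_leaves_add_ncard_longpaths hp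
  have h6p : (0 : ℝ) < 6 * p := by positivity
  by_contra! h
  obtain ⟨hleaves, hlong⟩ := h
  rw [lt_div_iff₀ h6p] at hleaves
  linarith

/-- in a finite rooted tree with `n ≥ 1` vertices, either the number
of leaves is at least `n / (6p)`, or `|longpaths(G, p)|` is at least `n / 3`. -/
theorem stmt0 {V : Type*} [Fintype V] (p : ℕ) (hp : 1 ≤ p)
    (par : V → V) (hforest : IsForest par) (hroot : ∃! v : V, par v = v)
    (n : ℕ) (hn : n = Fintype.card V) (hn1 : 1 ≤ n) :
    (n : ℝ) / (6 * p) ≤ ((leaves par).ncard : ℝ) ∨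
      (n : ℝ) / 3 ≤ ((longpaths par p).ncard : ℝ) :=
  stmt0_general p hp par hforest n hn
end

section
/- Fix an integer p ≥ 1 and a finite rooted forest G₀ with n vertices. Define inductively G_{i+1} to be the rooted forest obtained from G_i by deleting all vertices of leaves(G_i) ∪ longpaths(G_i, p) (a remaining vertex keeps its parent if the parent remains, and becomes a root otherwise). Then |V(G_i)| ≤ (1 − 1/(6p))^i · n for every i ≥ 0; in particular, G_i has no vertices for every i with (1 − 1/(6p))^i · n < 1. -/
open Function

/-- The children of `v` within the remaining vertex set `S`
(a remaining vertex keeps its parent if the parent remains, and becomes a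
root otherwise, so `u ∈ S` is a child of `v ∈ S` iff `par u = v`). -/
def childrenIn {V : Type*} (par : V → V) (S : Set V) (v : V) : Set V :=
  {u ∈ S | u ≠ v ∧ par u = v}

/-- Leaves of the forest induced on `S`: vertices of `S` with no children in `S`. -/
def leavesIn {V : Type*} (par : V → V) (S : Set V) : Set V :=
  {v ∈ S | childrenIn par S v = ∅}

/-- Vertices of `S` with exactly one child in the forest induced on `S`. -/
def oneChildIn {V : Type*} (par : V → V) (S : Set V) : Set V :=
  {v ∈ S | ∃! u, u ∈ S ∧ u ≠ v ∧ par u = v}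

/-- `longpathsIn par S p`: vertices of `S` having exactly one child (in the forest
induced on `S`) lying in a connected component of size at least `p` of the graph
induced on the vertices of `S` having exactly one child. -/
def longpathsIn {V : Type*} (par : V → V) (S : Set V) (p : ℕ) : Set V :=
  {v ∈ oneChildIn par S |
    p ≤ {u | Relation.ReflTransGen (adjOn par (oneChildIn par S)) v u}.ncard}

open Classical in
noncomputable def fdep {V : Type*} (par : V → V) (h : IsForest par) (v : V) : ℕ :=
  Nat.find (h v)

lemma fdep_spec {V : Type*} (par : V → V) (h : IsForest par) (v : V) :
    par^[fdep par h v + 1] v = par^[fdep par h v] v := by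
  classical exact Nat.find_spec (h v)

lemma fdep_le {V : Type*} (par : V → V) (h : IsForest par) {v : V} {m : ℕ}
    (hm : par^[m + 1] v = par^[m] v) : fdep par h v ≤ m := by
  classical exact Nat.find_le hm

lemma fdep_child {V : Type*} (par : V → V) (h : IsForest par) {u v : V}
    (hpar : par u = v) (hne : u ≠ v) : fdep par h v < fdep par h u := by
  have h1 : fdep par h u ≠ 0 := by
    intro h0
    have := fdep_spec par h u
    rw [h0] at this
    simp only [Function.iterate_one, Function.iterate_zero, id_eq] at this
    rw [Function.iterate_one, hpar] at this
    exact hne this.symm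
  obtain ⟨m, hm⟩ := Nat.exists_eq_succ_of_ne_zero h1
  have hs := fdep_spec par h u
  rw [hm] at hs
  have hv : ∀ k, par^[k] v = par^[k+1] u := by
    intro k; rw [Function.iterate_succ_apply, hpar]
  have key : par^[m + 1] v = par^[m] v := by
    rw [hv, hv]; exact hs
  have := fdep_le par h key
  omega

lemma exists_root {V : Type*} [Fintype V] (par : V → V) (h : IsForest par)
    {S : Set V} (hS : S.Nonempty) : ∃ r ∈ S, ¬ (par r ≠ r ∧ par r ∈ S) := by
  classical
  obtain ⟨r, hr, hmin⟩ := Set.exists_min_image S (fdep par h) S.toFinite hS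
  refine ⟨r, hr, ?_⟩
  rintro ⟨hne, hmem⟩
  have := fdep_child par h rfl (Ne.symm hne)
  have := hmin _ hmem
  omega

open Classical in
noncomputable def uch {V : Type*} (par : V → V) (S : Set V) (v : V) : V :=
  if h : v ∈ oneChildIn par S then h.2.choose else v

section UCH
variable {V : Type*} {par : V → V} {S : Set V}

lemma uch_spec {v : V} (h : v ∈ oneChildIn par S) :
    uch par S v ∈ S ∧ uch par S v ≠ v ∧ par (uch par S v) = v := by
  rw [uch, dif_pos h]
  exact h.2.choose_spec.1

lemma uch_unique {v u : V} (h : v ∈ oneChildIn par S)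
    (hu : u ∈ S) (hne : u ≠ v) (hpar : par u = v) : u = uch par S v := by
  rw [uch, dif_pos h]
  exact h.2.choose_spec.2 u ⟨hu, hne, hpar⟩

lemma par_iterate_uch {k : ℕ} {v : V}
    (h : ∀ j < k, (uch par S)^[j] v ∈ oneChildIn par S) :
    par^[k] ((uch par S)^[k] v) = v := by
  induction k with
  | zero => rfl
  | succ k ih =>
    rw [Function.iterate_succ_apply' (uch par S), Function.iterate_succ_apply par,
      (uch_spec (h k (Nat.lt_succ_self k))).2.2]
    exact ih (fun j hj => h j (Nat.lt_succ_of_lt hj))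

lemma uch_dep_mono (hf : IsForest par) {k : ℕ} {v : V}
    (h : ∀ j < k, (uch par S)^[j] v ∈ oneChildIn par S) :
    ∀ i j : ℕ, i < j → j ≤ k →
      fdep par hf ((uch par S)^[i] v) < fdep par hf ((uch par S)^[j] v) := by
  intro i j hij hjk
  induction j with
  | zero => omega
  | succ j ih =>
    have hjP : (uch par S)^[j] v ∈ oneChildIn par S := h j (by omega)
    have hstep : fdep par hf ((uch par S)^[j] v) < fdep par hf ((uch par S)^[j+1] v) := by
      rw [Function.iterate_succ_apply' (uch par S)]
      exact fdep_child par hf (uch_spec hjP).2.2 (uch_spec hjP).2.1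
    rcases Nat.lt_or_ge i j with hi | hi
    · exact lt_trans (ih hi (by omega)) hstep
    · have : i = j := by omega
      rw [this]; exact hstep

lemma uch_mem_comp {k : ℕ} {v : V} (hv : v ∈ oneChildIn par S)
    (h : ∀ j ≤ k, (uch par S)^[j] v ∈ oneChildIn par S) :
    ∀ j ≤ k, Relation.ReflTransGen (adjOn par (oneChildIn par S)) v ((uch par S)^[j] v) := by
  intro j hj
  induction j with
  | zero => exact Relation.ReflTransGen.refl
  | succ j ih =>
    refine Relation.ReflTransGen.tail (ih (by omega)) ?_
    have hjP := h j (by omega)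
    have hspec := uch_spec hjP
    have hj1 : (uch par S)^[j+1] v = uch par S ((uch par S)^[j] v) :=
      Function.iterate_succ_apply' (uch par S) j v
    rw [hj1]
    exact ⟨hjP, hj1 ▸ h (j+1) hj, Ne.symm hspec.2.1, Or.inr hspec.2.2⟩

lemma uch_count [Fintype V] (hf : IsForest par) {k : ℕ} {v : V}
    (hv : v ∈ oneChildIn par S)
    (h : ∀ j < k, (uch par S)^[j] v ∈ oneChildIn par S) :
    k ≤ {u | Relation.ReflTransGen (adjOn par (oneChildIn par S)) v u}.ncard := by
  classical
  set comp := {u | Relation.ReflTransGen (adjOn par (oneChildIn par S)) v u} with hcomp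
  have hinj : Set.InjOn (fun j => (uch par S)^[j] v) ↑(Finset.range k) := by
    intro i hi j hj hij
    simp only [Finset.coe_range, Set.mem_Iio] at hi hj
    by_contra hne
    simp only at hij
    rcases Nat.lt_or_ge i j with h' | h'
    · have := uch_dep_mono hf (fun m hm => h m hm) i j h' (by omega)
      rw [hij] at this; omega
    · have h'' : j < i := by omega
      have := uch_dep_mono hf (fun m hm => h m hm) j i h'' (by omega)
      rw [hij] at this; omega
  have hsub : ↑((Finset.range k).image (fun j => (uch par S)^[j] v)) ⊆ comp := by
    intro x hx
    simp only [Finset.coe_image, Finset.coe_range, Set.mem_image, Set.mem_Iio] at hx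
    obtain ⟨j, hj, rfl⟩ := hx
    rcases Nat.eq_zero_or_pos k with hk | hk
    · omega
    · exact uch_mem_comp (k := k - 1) hv (fun m hm => h m (by omega)) j (by omega)
  calc k = ((Finset.range k).image (fun j => (uch par S)^[j] v)).card := by
            rw [Finset.card_image_of_injOn hinj, Finset.card_range]
    _ = (↑((Finset.range k).image (fun j => (uch par S)^[j] v)) : Set V).ncard := by
            rw [Set.ncard_coe_finset]
    _ ≤ comp.ncard := Set.ncard_le_ncard hsub comp.toFinite

lemma uch_exit [Fintype V] (hf : IsForest par) {p : ℕ} {v : V}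
    (hv : v ∈ oneChildIn par S)
    (hshort : ¬ p ≤ {u | Relation.ReflTransGen (adjOn par (oneChildIn par S)) v u}.ncard) :
    ∃ m, (uch par S)^[m] v ∉ oneChildIn par S := by
  by_contra hall
  push_neg at hall
  exact hshort (uch_count hf hv (fun j _ => hall j))

lemma key_count [Fintype V] (hf : IsForest par) {p : ℕ} (hp : 1 ≤ p)
    (hS : S.Nonempty) :
    S.ncard ≤ 2 * p * (leavesIn par S ∪ longpathsIn par S p).ncard := by
  classical
  set S' : Finset V := S.toFinite.toFinset with hS'
  have hmemS' : ∀ v, v ∈ S' ↔ v ∈ S := fun v => Set.Finite.mem_toFinset _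
  set ch : V → Finset V := fun v => S'.filter (fun u => u ≠ v ∧ par u = v) with hch
  have hchmem : ∀ u v, u ∈ ch v ↔ u ∈ S ∧ u ≠ v ∧ par u = v := by
    intro u v; simp [hch, Finset.mem_filter, hmemS' u]
  -- leaves characterization
  have hleaf : ∀ v, v ∈ leavesIn par S ↔ v ∈ S ∧ (ch v).card = 0 := by
    intro v
    constructor
    · rintro ⟨hvS, hempty⟩
      refine ⟨hvS, Finset.card_eq_zero.mpr ?_⟩
      ext u
      simp only [hchmem, Finset.notMem_empty, iff_false]
      intro hu
      have : u ∈ childrenIn par S v := hu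
      rw [hempty] at this
      exact this
    · rintro ⟨hvS, hcard⟩
      refine ⟨hvS, ?_⟩
      ext u
      simp only [Set.mem_empty_iff_false, iff_false]
      intro hu
      have : u ∈ ch v := (hchmem u v).mpr hu
      rw [Finset.card_eq_zero.mp hcard] at this
      exact absurd this (Finset.notMem_empty u)
  -- one child characterization
  have hone : ∀ v, v ∈ oneChildIn par S ↔ v ∈ S ∧ (ch v).card = 1 := by
    intro v
    constructor
    · rintro ⟨hvS, u, hu, huniq⟩
      refine ⟨hvS, ?_⟩
      rw [Finset.card_eq_one]
      refine ⟨u, ?_⟩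
      ext w
      simp only [hchmem, Finset.mem_singleton]
      constructor
      · intro hw; exact huniq w hw
      · rintro rfl; exact hu
    · rintro ⟨hvS, hcard⟩
      obtain ⟨u, hu⟩ := Finset.card_eq_one.mp hcard
      refine ⟨hvS, u, ?_, ?_⟩
      · have : u ∈ ch v := by rw [hu]; exact Finset.mem_singleton_self u
        exact (hchmem u v).mp this
      · intro w hw
        have : w ∈ ch v := (hchmem w v).mpr hw
        rw [hu, Finset.mem_singleton] at this
        exact this
  set Lf : Finset V := S'.filter (fun v => (ch v).card = 0) with hLf
  set Pf : Finset V := S'.filter (fun v => (ch v).card = 1) with hPf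
  set Bf : Finset V := S'.filter (fun v => 2 ≤ (ch v).card) with hBf
  have hdPB : Disjoint Pf Bf := by
    rw [Finset.disjoint_left]
    intro a ha hb
    simp only [hPf, hBf, Finset.mem_filter] at ha hb
    omega
  have hdLB : Disjoint Lf Bf := by
    rw [Finset.disjoint_left]
    intro a ha hb
    simp only [hLf, hBf, Finset.mem_filter] at ha hb
    omega
  -- partition of S'
  have hpartition : S'.card = Lf.card + Pf.card + Bf.card := by
    have hU : S'.filter (fun v => ¬ (ch v).card = 0) = Pf ∪ Bf := by
      ext a
      simp only [hPf, hBf, Finset.mem_filter, Finset.mem_union]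
      constructor
      · rintro ⟨h1, h2⟩
        rcases Nat.lt_or_ge (ch a).card 2 with h | h
        · exact Or.inl ⟨h1, by omega⟩
        · exact Or.inr ⟨h1, h⟩
      · rintro (⟨h1, h2⟩ | ⟨h1, h2⟩) <;> exact ⟨h1, by omega⟩
    have he := Finset.card_filter_add_card_filter_not
      (s := S') (p := fun v => (ch v).card = 0)
    rw [hU, Finset.card_union_of_disjoint hdPB] at he
    rw [← hLf] at he
    omega
  -- sum of children = number of non-roots
  have hsum : (∑ v ∈ S', (ch v).card) + 1 ≤ S'.card := by
    have hdisj : ∀ x ∈ S', ∀ y ∈ S', x ≠ y → Disjoint (ch x) (ch y) := by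
      intro x _ y _ hxy
      rw [Finset.disjoint_left]
      intro a ha hb
      have h1 := (hchmem a x).mp ha
      have h2 := (hchmem a y).mp hb
      exact hxy (h1.2.2 ▸ h2.2.2)
    have hbi : (S'.biUnion ch).card = ∑ v ∈ S', (ch v).card :=
      Finset.card_biUnion hdisj
    have hbieq : S'.biUnion ch = S'.filter (fun u => par u ≠ u ∧ par u ∈ S) := by
      ext u
      simp only [Finset.mem_biUnion, Finset.mem_filter]
      constructor
      · rintro ⟨v, hv, hu⟩
        obtain ⟨huS, hne, hpar⟩ := (hchmem u v).mp hu
        refine ⟨(hmemS' u).mpr huS, ?_, ?_⟩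
        · rw [hpar]; exact Ne.symm hne
        · rw [hpar]; exact (hmemS' v).mp hv
      · rintro ⟨huS', hne, hmem⟩
        exact ⟨par u, (hmemS' _).mpr hmem,
          (hchmem u (par u)).mpr ⟨(hmemS' u).mp huS', Ne.symm hne, rfl⟩⟩
    obtain ⟨r, hrS, hr⟩ := exists_root par hf hS
    have hrS' : r ∈ S' := (hmemS' r).mpr hrS
    have hnot : r ∉ S'.filter (fun u => par u ≠ u ∧ par u ∈ S) := by
      simp only [Finset.mem_filter]
      rintro ⟨-, h2⟩
      exact hr h2
    have hsub : S'.filter (fun u => par u ≠ u ∧ par u ∈ S) ⊆ S'.erase r :=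
      (Finset.subset_erase).mpr ⟨Finset.filter_subset _ _, hnot⟩
    have hcard := Finset.card_le_card hsub
    rw [Finset.card_erase_of_mem hrS'] at hcard
    have hpos : 1 ≤ S'.card := Finset.card_pos.mpr ⟨r, hrS'⟩
    rw [← hbi, hbieq]
    omega
  -- lower bound on the sum
  have hlow : Pf.card + 2 * Bf.card ≤ ∑ v ∈ S', (ch v).card := by
    have hsub2 : Pf ∪ Bf ⊆ S' := by
      apply Finset.union_subset <;> exact Finset.filter_subset _ _
    have h1 : ∑ v ∈ Pf ∪ Bf, (ch v).card ≤ ∑ v ∈ S', (ch v).card :=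
      Finset.sum_le_sum_of_subset hsub2
    rw [Finset.sum_union hdPB] at h1
    have h2 : ∑ v ∈ Pf, (ch v).card = Pf.card := by
      rw [Finset.sum_congr rfl (fun v hv => (Finset.mem_filter.mp hv).2),
        Finset.sum_const, smul_eq_mul, mul_one]
    have h3 : Bf.card • 2 ≤ ∑ v ∈ Bf, (ch v).card :=
      Finset.card_nsmul_le_sum Bf _ 2 (fun v hv => (Finset.mem_filter.mp hv).2)
    simp only [smul_eq_mul] at h3
    omega
  -- short path vertices bound
  set Tset : Set V := oneChildIn par S \ longpathsIn par S p with hTset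
  have hshortbound : Tset.ncard ≤ (Lf.card + Bf.card) * (p - 1) := by
    set kf : V → ℕ := fun v =>
      if h : ∃ m, (uch par S)^[m] v ∉ oneChildIn par S then Nat.find h else 0 with hkf
    set F : V → V × ℕ := fun v => ((uch par S)^[kf v] v, kf v) with hF
    set Tf : Finset V := Tset.toFinite.toFinset with hTf
    have hmemTf : ∀ v, v ∈ Tf ↔ v ∈ Tset := fun v => Set.Finite.mem_toFinset _
    -- facts about kf on Tset
    have hex : ∀ v ∈ Tset, ∃ m, (uch par S)^[m] v ∉ oneChildIn par S := by
      intro v hv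
      exact uch_exit hf hv.1 (fun hle => hv.2 ⟨hv.1, hle⟩)
    have hkfeq : ∀ v (h : ∃ m, (uch par S)^[m] v ∉ oneChildIn par S),
        kf v = Nat.find h := by
      intro v h; rw [hkf]; simp only [dif_pos h]
    have hout : ∀ v ∈ Tset, (uch par S)^[kf v] v ∉ oneChildIn par S := by
      intro v hv
      rw [hkfeq v (hex v hv)]
      exact Nat.find_spec (hex v hv)
    have hmin : ∀ v ∈ Tset, ∀ j < kf v, (uch par S)^[j] v ∈ oneChildIn par S := by
      intro v hv j hj
      rw [hkfeq v (hex v hv)] at hj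
      exact not_not.mp (Nat.find_min (hex v hv) hj)
    have hne0 : ∀ v ∈ Tset, kf v ≠ 0 := by
      intro v hv h0
      exact hout v hv (by rw [h0]; exact hv.1)
    have hklt : ∀ v ∈ Tset, kf v < p := by
      intro v hv
      have h1 := uch_count hf hv.1 (hmin v hv)
      have h2 : ¬ p ≤ {u | Relation.ReflTransGen (adjOn par (oneChildIn par S)) v u}.ncard :=
        fun hle => hv.2 ⟨hv.1, hle⟩
      omega
    -- the injection
    set target : Finset (V × ℕ) :=
      (S'.filter (fun w => w ∉ oneChildIn par S)) ×ˢ Finset.Ico 1 p with htarget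
    have hmaps : ∀ v ∈ Tf, F v ∈ target := by
      intro v hvTf
      have hv := (hmemTf v).mp hvTf
      rw [htarget, hF]
      simp only [Finset.mem_product, Finset.mem_filter, Finset.mem_Ico]
      obtain ⟨m, hm⟩ := Nat.exists_eq_succ_of_ne_zero (hne0 v hv)
      have hmem : (uch par S)^[kf v] v ∈ S := by
        rw [hm, Function.iterate_succ_apply' (uch par S)]
        exact (uch_spec (hmin v hv m (by omega))).1
      exact ⟨⟨(hmemS' _).mpr hmem, hout v hv⟩, by omega, hklt v hv⟩
    have hinj : Set.InjOn F ↑Tf := by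
      intro v1 hv1 v2 hv2 heq
      have hv1' := (hmemTf v1).mp hv1
      have hv2' := (hmemTf v2).mp hv2
      rw [hF] at heq
      simp only [Prod.mk.injEq] at heq
      obtain ⟨heq1, heq2⟩ := heq
      have e1 : par^[kf v1] ((uch par S)^[kf v1] v1) = v1 :=
        par_iterate_uch (hmin v1 hv1')
      have e2 : par^[kf v2] ((uch par S)^[kf v2] v2) = v2 :=
        par_iterate_uch (hmin v2 hv2')
      rw [← e1, ← e2, heq1, heq2]
    have hcardle : Tf.card ≤ target.card :=
      Finset.card_le_card_of_injOn F hmaps hinj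
    have htargetcard : target.card = (Lf.card + Bf.card) * (p - 1) := by
      rw [htarget, Finset.card_product, Nat.card_Ico]
      congr 1
      have : S'.filter (fun w => w ∉ oneChildIn par S) = Lf ∪ Bf := by
        ext a
        simp only [hLf, hBf, Finset.mem_filter, Finset.mem_union]
        constructor
        · rintro ⟨h1, h2⟩
          have : ¬ (ch a).card = 1 := fun hc => h2 ((hone a).mpr ⟨(hmemS' a).mp h1, hc⟩)
          rcases Nat.lt_or_ge (ch a).card 2 with h | h
          · exact Or.inl ⟨h1, by omega⟩
          · exact Or.inr ⟨h1, h⟩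
        · rintro (⟨h1, h2⟩ | ⟨h1, h2⟩) <;>
            refine ⟨h1, fun hmem => ?_⟩ <;>
            · have := (hone a).mp hmem
              omega
      rw [this, Finset.card_union_of_disjoint hdLB]
    have hTcard : Tset.ncard = Tf.card := Set.ncard_eq_toFinset_card _ _
    omega
  -- translate cardinalities
  have hScard : S.ncard = S'.card := by
    rw [hS', Set.ncard_eq_toFinset_card S S.toFinite]
  have hLcard : (leavesIn par S).ncard = Lf.card := by
    have : leavesIn par S = ↑Lf := by
      ext v; simp only [hLf, Finset.coe_filter, Set.mem_setOf_eq, hmemS', hleaf v]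
    rw [this, Set.ncard_coe_finset]
  have hPcard : (oneChildIn par S).ncard = Pf.card := by
    have : oneChildIn par S = ↑Pf := by
      ext v; simp only [hPf, Finset.coe_filter, Set.mem_setOf_eq, hmemS', hone v]
    rw [this, Set.ncard_coe_finset]
  have hLPsub : longpathsIn par S p ⊆ oneChildIn par S := fun v hv => hv.1
  have hsplit : Tset.ncard + (longpathsIn par S p).ncard = (oneChildIn par S).ncard :=
    Set.ncard_diff_add_ncard_of_subset hLPsub
  have hdisjLP : Disjoint (leavesIn par S) (longpathsIn par S p) := by
    rw [Set.disjoint_left]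
    intro v hv hv'
    have h1 := (hleaf v).mp hv
    have h2 := (hone v).mp (hLPsub hv')
    omega
  have hunion : (leavesIn par S ∪ longpathsIn par S p).ncard =
      Lf.card + (longpathsIn par S p).ncard := by
    rw [Set.ncard_union_eq hdisjLP (Set.toFinite _) (Set.toFinite _), hLcard]
  -- final arithmetic
  rw [hScard, hunion]
  set ℓ := Lf.card
  set b := Bf.card
  set lp := (longpathsIn par S p).ncard
  set t := Tset.ncard
  have h1 : S'.card = ℓ + Pf.card + b := hpartition
  have h2 : Pf.card = t + lp := by rw [hPcard] at hsplit; omega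
  have h3 : b + 1 ≤ ℓ := by
    have := hlow
    omega
  have h4 : t ≤ (ℓ + b) * (p - 1) := hshortbound
  have hp1 : (ℓ + b) * (p - 1) + (ℓ + b) = (ℓ + b) * p := by
    have hpp : p - 1 + 1 = p := Nat.succ_pred_eq_of_pos hp
    calc (ℓ + b) * (p - 1) + (ℓ + b) = (ℓ + b) * ((p - 1) + 1) := by ring
      _ = (ℓ + b) * p := by rw [hpp]
  calc S'.card = ℓ + (t + lp) + b := by omega
    _ ≤ ℓ + ((ℓ + b) * (p - 1) + lp) + b := by omega
    _ = lp + ((ℓ + b) * (p - 1) + (ℓ + b)) := by omega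
    _ = lp + (ℓ + b) * p := by rw [hp1]
    _ ≤ lp + (2 * ℓ) * p := by
        have := Nat.mul_le_mul_right (k := p) (show ℓ + b ≤ 2 * ℓ by omega)
        omega
    _ ≤ 2 * p * lp + 2 * p * ℓ := by
        have h6 : lp ≤ 2 * p * lp := Nat.le_mul_of_pos_left lp (by omega)
        have h7 : (2 * ℓ) * p = 2 * p * ℓ := by ring
        omega
    _ = 2 * p * (ℓ + lp) := by ring

end UCH

/-- iteratively deleting `leaves(G_i) ∪ longpaths(G_i, p)` from a
finite rooted forest with `n` vertices satisfies
`|V(G_i)| ≤ (1 - 1/(6p))^i * n`; in particular `G_i` is empty whenever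
`(1 - 1/(6p))^i * n < 1`. -/
theorem stmt2 {V : Type*} [Fintype V] (p : ℕ) (hp : 1 ≤ p)
    (par : V → V) (hforest : IsForest par)
    (n : ℕ) (hn : n = Fintype.card V)
    (Vs : ℕ → Set V) (h0 : Vs 0 = Set.univ)
    (hstep : ∀ i, Vs (i + 1) = Vs i \ (leavesIn par (Vs i) ∪ longpathsIn par (Vs i) p)) :
    ∀ i : ℕ,
      ((Vs i).ncard : ℝ) ≤ (1 - 1 / (6 * (p : ℝ))) ^ i * (n : ℝ) ∧
      ((1 - 1 / (6 * (p : ℝ))) ^ i * (n : ℝ) < 1 → Vs i = ∅) := by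
  have hp0 : (0 : ℝ) < p := by exact_mod_cast hp
  have hp1 : (1 : ℝ) ≤ p := by exact_mod_cast hp
  have h6p : (0 : ℝ) < 6 * p := by linarith
  have hbase : (0 : ℝ) ≤ 1 - 1 / (6 * (p : ℝ)) := by
    rw [sub_nonneg]
    rw [div_le_one h6p]
    linarith
  have main : ∀ i, ((Vs i).ncard : ℝ) ≤ (1 - 1 / (6 * (p : ℝ))) ^ i * (n : ℝ) := by
    intro i
    induction i with
    | zero =>
      rw [h0, pow_zero, one_mul, Set.ncard_univ, Nat.card_eq_fintype_card, hn]
    | succ i ih =>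
      rw [hstep i]
      set D := leavesIn par (Vs i) ∪ longpathsIn par (Vs i) p with hD
      rcases Set.eq_empty_or_nonempty (Vs i) with hemp | hne
      · rw [hemp]
        simp only [Set.empty_diff, Set.ncard_empty, Nat.cast_zero]
        positivity
      · have hkey := key_count hforest hp hne
        have hDsub : D ⊆ Vs i := by
          rw [hD]
          apply Set.union_subset
          · exact fun v hv => hv.1
          · exact fun v hv => hv.1.1
        have hdle : D.ncard ≤ (Vs i).ncard := Set.ncard_le_ncard hDsub (Set.toFinite _)
        have hdiff : (Vs i \ D).ncard = (Vs i).ncard - D.ncard :=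
          Set.ncard_diff hDsub
        set s : ℝ := ((Vs i).ncard : ℝ)
        set d : ℝ := (D.ncard : ℝ)
        have hcast : ((Vs i \ D).ncard : ℝ) = s - d := by
          rw [hdiff, Nat.cast_sub hdle]
        rw [hcast]
        have hkey' : s ≤ 6 * (p : ℝ) * d := by
          have h1' : (((Vs i).ncard : ℕ) : ℝ) ≤ ((2 * p * D.ncard : ℕ) : ℝ) :=
            Nat.cast_le.mpr hkey
          push_cast at h1'
          have h1 : s ≤ 2 * (p : ℝ) * d := h1'
          have hd0 : (0 : ℝ) ≤ d := Nat.cast_nonneg _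
          nlinarith [h1, hd0, hp0]
        have hstep1 : s - d ≤ (1 - 1 / (6 * (p : ℝ))) * s := by
          have : s / (6 * (p : ℝ)) ≤ d := by
            rw [div_le_iff₀ h6p]
            linarith [hkey']
          have hexp : (1 - 1 / (6 * (p : ℝ))) * s = s - s / (6 * (p : ℝ)) := by
            field_simp
          rw [hexp]
          linarith
        calc s - d ≤ (1 - 1 / (6 * (p : ℝ))) * s := hstep1
          _ ≤ (1 - 1 / (6 * (p : ℝ))) * ((1 - 1 / (6 * (p : ℝ))) ^ i * (n : ℝ)) :=
              mul_le_mul_of_nonneg_left ih hbase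
          _ = (1 - 1 / (6 * (p : ℝ))) ^ (i + 1) * (n : ℝ) := by ring
  intro i
  refine ⟨main i, fun hlt => ?_⟩
  have h1 : ((Vs i).ncard : ℝ) < 1 := lt_of_le_of_lt (main i) hlt
  have h2 : (Vs i).ncard = 0 := by exact_mod_cast Nat.lt_one_iff.mp (by exact_mod_cast h1)
  exact (Set.ncard_eq_zero (Set.toFinite _)).mp h2
end

section
/- Let (Σ', R) be a digraph with Σ' finite and nonempty that is strongly connected (every vertex is reachable from every vertex) and in which every vertex is flexible. Then for all a, b ∈ Σ' and every integer ℓ ≥ (max over σ ∈ Σ' of flex(σ)) + |Σ'|, there is a walk of length exactly ℓ from a to b. -/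
/-- A walk of length `k` from `a` to `b` in the digraph with edge relation `R`. -/
def IsWalk {V : Type*} (R : V → V → Prop) (k : ℕ) (f : ℕ → V) (a b : V) : Prop :=
  f 0 = a ∧ f k = b ∧ ∀ i < k, R (f i) (f (i + 1))

/-- `b` is reachable from `a`: there is a walk of some length `k ≥ 0` from `a` to `b`. -/
def Reach {V : Type*} (R : V → V → Prop) (a b : V) : Prop :=
  ∃ (k : ℕ) (f : ℕ → V), IsWalk R k f a b

/-- A vertex `a` is flexible: there is `K` such that for every `k ≥ K` there is a
walk of length exactly `k` from `a` to `a`. -/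
def Flexible {V : Type*} (R : V → V → Prop) (a : V) : Prop :=
  ∃ K : ℕ, ∀ k ≥ K, ∃ f : ℕ → V, IsWalk R k f a a

/-- The flexibility of `a`: the least `K` such that for every `k ≥ K` there is a
walk of length exactly `k` from `a` to `a`. -/
noncomputable def flex {V : Type*} (R : V → V → Prop) (a : V) : ℕ :=
  sInf {K : ℕ | ∀ k ≥ K, ∃ f : ℕ → V, IsWalk R k f a a}

/-!
A shortest walk from `a` to `b` visits no vertex twice, so it has length `d < |V|`.
Since `ℓ - d ≥ flex a`, there is a closed walk at `a` of length `ℓ - d`, and following it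
by the shortest walk gives a walk of length exactly `ℓ` from `a` to `b`.
-/

namespace IsWalk

variable {V : Type*} {R : V → V → Prop} {k : ℕ} {f : ℕ → V} {a b : V}

lemma take (hf : IsWalk R k f a b) {i : ℕ} (hi : i ≤ k) : IsWalk R i f a (f i) :=
  ⟨hf.1, rfl, fun n hn => hf.2.2 n (by omega)⟩

lemma drop (hf : IsWalk R k f a b) {j : ℕ} (hj : j ≤ k) :
    IsWalk R (k - j) (fun n => f (j + n)) (f j) b := by
  refine ⟨rfl, by simpa [Nat.add_sub_cancel' hj] using hf.2.1, fun n hn => ?_⟩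
  simpa [← add_assoc] using hf.2.2 (j + n) (by omega)

lemma append {m d : ℕ} {g h : ℕ → V} {c : V} (hg : IsWalk R m g a c) (hh : IsWalk R d h c b) :
    ∃ f : ℕ → V, IsWalk R (m + d) f a b := by
  obtain ⟨hg0, hgm, hge⟩ := hg
  obtain ⟨hh0, hhd, hhe⟩ := hh
  refine ⟨fun n => if n ≤ m then g n else h (n - m), by simp [hg0], ?_, fun i hi => ?_⟩
  · rcases Nat.eq_zero_or_pos d with rfl | hd
    · simp [hgm, ← hh0, hhd]
    · simp [show ¬m + d ≤ m by omega, hhd]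
  · rcases lt_trichotomy i m with him | rfl | him
    · simpa [him.le, Nat.succ_le_of_lt him] using hge i him
    · simpa [hgm, ← hh0, Nat.add_sub_cancel_left] using hhe 0 (by omega)
    · simpa [show ¬i ≤ m by omega, show ¬i + 1 ≤ m by omega, Nat.sub_add_comm him.le]
        using hhe (i - m) (by omega)

lemma shortcut (hf : IsWalk R k f a b) {i j : ℕ} (hij : i ≤ j) (hj : j ≤ k) (hfij : f i = f j) :
    ∃ g : ℕ → V, IsWalk R (i + (k - j)) g a b :=
  (hf.take (hij.trans hj)).append (hfij ▸ hf.drop hj)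

end IsWalk

lemma Reach.exists_isWalk_lt_card {V : Type*} [Fintype V] {R : V → V → Prop} {a b : V}
    (hab : Reach R a b) : ∃ d < Fintype.card V, ∃ f : ℕ → V, IsWalk R d f a b := by
  classical
  let d := Nat.find hab
  obtain ⟨f, hf⟩ : ∃ f : ℕ → V, IsWalk R d f a b := Nat.find_spec hab
  refine ⟨d, ?_, f, hf⟩
  by_contra! hcard
  obtain ⟨i, j, hij, hfij⟩ := Fintype.exists_ne_map_eq_of_card_lt (fun n : Fin (d + 1) => f n)
    (by simpa [Nat.lt_succ_iff] using hcard)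
  wlog hlt : i < j generalizing i j
  · exact this j i hij.symm hfij.symm (lt_of_le_of_ne (not_lt.mp hlt) hij.symm)
  obtain ⟨g, hg⟩ := hf.shortcut hlt.le (Nat.lt_succ_iff.mp j.2) hfij
  have : i + (d - j) < d := by omega
  exact Nat.find_min hab this ⟨g, hg⟩

lemma Flexible.exists_isWalk_of_flex_le {V : Type*} {R : V → V → Prop} {a : V}
    (ha : Flexible R a) {k : ℕ} (hk : flex R a ≤ k) : ∃ f : ℕ → V, IsWalk R k f a a :=
  Nat.sInf_mem (s := {K : ℕ | ∀ k ≥ K, ∃ f : ℕ → V, IsWalk R k f a a}) ha k hk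

theorem stmt5_general {V : Type*} [Fintype V] (R : V → V → Prop)
    (hconn : ∀ a b : V, Reach R a b)
    (hflex : ∀ a : V, Flexible R a)
    (a b : V) (ℓ : ℕ)
    (hℓ : (Finset.univ.sup fun σ : V => flex R σ) + Fintype.card V ≤ ℓ) :
    ∃ f : ℕ → V, IsWalk R ℓ f a b := by
  obtain ⟨d, hd, h, hh⟩ := (hconn a b).exists_isWalk_lt_card
  have hflex_le : flex R a ≤ ℓ - d := by
    have := Finset.le_sup (f := fun σ : V => flex R σ) (Finset.mem_univ a)
    omega
  obtain ⟨g, hg⟩ := (hflex a).exists_isWalk_of_flex_le hflex_le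
  simpa [Nat.sub_add_cancel (show d ≤ ℓ by omega)] using hg.append hh

/-- in a finite nonempty strongly connected digraph in which every
vertex is flexible, for all vertices `a, b` and every
`ℓ ≥ max_σ flex(σ) + |Σ'|` there is a walk of length exactly `ℓ` from `a` to `b`. -/
theorem stmt5 {V : Type*} [Fintype V] [Nonempty V] (R : V → V → Prop)
    (hconn : ∀ a b : V, Reach R a b)
    (hflex : ∀ a : V, Flexible R a)
    (a b : V) (ℓ : ℕ)
    (hℓ : (Finset.univ.sup fun σ : V => flex R σ) + Fintype.card V ≤ ℓ) :
    ∃ f : ℕ → V, IsWalk R ℓ f a b :=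
  stmt5_general R hconn hflex a b ℓ hℓ
end

section
/- Let Π = (δ, Σ, C) be an LCL problem. If Π has a uniform certificate for O(log* n) solvability with label set Σ_T and depth d, then Π has a uniform certificate for O(log* n) solvability with the same label set Σ_T and depth d + 1. -/
/-- The set of configurations `C` is closed under permutations of the children. -/
def PermClosed {L : Type*} (δ : ℕ) (C : Set (L × (Fin δ → L))) : Prop :=
  ∀ (σ : L) (c : Fin δ → L) (π : Equiv.Perm (Fin δ)), (σ, c) ∈ C → (σ, c ∘ π) ∈ C

/-- A labeling `T` of the complete `δ`-ary tree of depth `d` (vertices are words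
over `Fin δ` of length at most `d`, the root is the empty word, the children of a
word `w` of length `< d` are the words `w ++ [j]`) is correct w.r.t. the
configurations `C`. -/
def CorrectLabeling {L : Type*} (δ : ℕ) (C : Set (L × (Fin δ → L))) (d : ℕ)
    (T : List (Fin δ) → L) : Prop :=
  ∀ w : List (Fin δ), w.length < d → (T w, fun j : Fin δ => T (w ++ [j])) ∈ C

/-- A uniform certificate for `O(log* n)` solvability with label set `ST` and
depth `d ≥ 1`: a family `(T σ)_{σ ∈ ST}` of correct labelings of the complete
`δ`-ary tree of depth `d` using only labels from `ST`, all agreeing on the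
labels of all leaves, with `T σ` labeling the root with `σ`. -/
def UniformCert {L : Type*} (δ : ℕ) (C : Set (L × (Fin δ → L))) (ST : Set L)
    (d : ℕ) : Prop :=
  1 ≤ d ∧
  ∃ T : L → List (Fin δ) → L,
    (∀ σ ∈ ST, CorrectLabeling δ C d (T σ)) ∧
    (∀ σ ∈ ST, ∀ w : List (Fin δ), w.length ≤ d → T σ w ∈ ST) ∧
    (∀ σ ∈ ST, ∀ σ' ∈ ST, ∀ w : List (Fin δ), w.length = d → T σ w = T σ' w) ∧
    (∀ σ ∈ ST, T σ [] = σ)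

/-!
Graft, below every leaf `u` of `T σ`, the certificate tree `T (T σ u)` cut to depth `e ≤ d`.
The grafted tree is correct because `T (T σ u)` has root label `T σ u`, and its leaves agree
because `T σ u` does not depend on `σ` and the grafted subtree depends only on that label.
-/

section Graft

variable {L : Type*} {δ : ℕ} {C : Set (L × (Fin δ → L))} {ST : Set L} {d e : ℕ}
  {T : L → List (Fin δ) → L}

def graft (T : L → List (Fin δ) → L) (d : ℕ) (σ : L) (w : List (Fin δ)) : L :=
  if w.length ≤ d then T σ w else T (T σ (w.take d)) (w.drop d)

lemma graft_of_length_le {σ : L} {w : List (Fin δ)} (hw : w.length ≤ d) :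
    graft T d σ w = T σ w :=
  if_pos hw

lemma graft_of_le_length (hroot : ∀ σ ∈ ST, T σ [] = σ)
    (hmem : ∀ σ ∈ ST, ∀ w : List (Fin δ), w.length ≤ d → T σ w ∈ ST)
    {σ : L} (hσ : σ ∈ ST) {w : List (Fin δ)} (hw : d ≤ w.length) :
    graft T d σ w = T (T σ (w.take d)) (w.drop d) := by
  unfold graft
  split_ifs with hwd
  · have hlen : w.length = d := le_antisymm hwd hw
    rw [List.take_of_length_le hwd, List.drop_of_length_le hwd,
      hroot _ (hmem σ hσ w hlen.le)]
  · rfl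

lemma graft_mem (hmem : ∀ σ ∈ ST, ∀ w : List (Fin δ), w.length ≤ d → T σ w ∈ ST)
    (he : e ≤ d) {σ : L} (hσ : σ ∈ ST) {w : List (Fin δ)} (hw : w.length ≤ d + e) :
    graft T d σ w ∈ ST := by
  unfold graft
  split_ifs with hwd
  · exact hmem σ hσ w hwd
  · refine hmem _ (hmem σ hσ _ (List.length_take_le d w)) _ ?_
    rw [List.length_drop]
    omega

lemma correctLabeling_graft (hcorr : ∀ σ ∈ ST, CorrectLabeling δ C d (T σ))
    (hmem : ∀ σ ∈ ST, ∀ w : List (Fin δ), w.length ≤ d → T σ w ∈ ST)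
    (hroot : ∀ σ ∈ ST, T σ [] = σ) (he : e ≤ d) {σ : L} (hσ : σ ∈ ST) :
    CorrectLabeling δ C (d + e) (graft T d σ) := by
  intro w hw
  by_cases hwd : w.length < d
  · have hchild : ∀ j : Fin δ, (w ++ [j]).length ≤ d := fun j => by simpa using hwd
    simp only [graft_of_length_le hwd.le, graft_of_length_le (hchild _)]
    exact hcorr σ hσ w hwd
  · replace hwd := not_lt.mp hwd
    have hchild : ∀ j : Fin δ, d ≤ (w ++ [j]).length := fun j => by
      rw [List.length_append, List.length_singleton]; omega
    simp only [graft_of_le_length hroot hmem hσ hwd, graft_of_le_length hroot hmem hσ (hchild _),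
      List.take_append_of_le_length hwd, List.drop_append_of_le_length hwd]
    refine hcorr _ (hmem σ hσ _ (List.length_take_le d w)) _ ?_
    rw [List.length_drop]
    omega

theorem UniformCert.add_of_le (he : e ≤ d) (h : UniformCert δ C ST d) :
    UniformCert δ C ST (d + e) := by
  obtain ⟨hd, T, hcorr, hmem, hleaf, hroot⟩ := h
  refine ⟨by omega, graft T d, fun σ hσ => correctLabeling_graft hcorr hmem hroot he hσ,
    fun σ hσ w hw => graft_mem hmem he hσ hw, fun σ hσ σ' hσ' w hw => ?_,
    fun σ hσ => (graft_of_length_le (Nat.zero_le d)).trans (hroot σ hσ)⟩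
  have hwd : d ≤ w.length := by omega
  rw [graft_of_le_length hroot hmem hσ hwd, graft_of_le_length hroot hmem hσ' hwd,
    hleaf σ hσ σ' hσ' _ (List.length_take_of_le hwd)]

end Graft

theorem stmt6_general {L : Type*} (δ : ℕ)
    (C : Set (L × (Fin δ → L)))
    (ST : Set L) (d : ℕ) (h : UniformCert δ C ST d) :
    UniformCert δ C ST (d + 1) :=
  h.add_of_le h.1

/-- if an LCL problem `Π = (δ, Σ, C)` has a uniform certificate for
`O(log* n)` solvability with label set `ST` and depth `d`, then it has one with
the same label set and depth `d + 1`. -/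
theorem stmt6 {L : Type*} [Fintype L] [Nonempty L] (δ : ℕ) (hδ : 1 ≤ δ)
    (C : Set (L × (Fin δ → L))) (hperm : PermClosed δ C)
    (ST : Set L) (d : ℕ) (h : UniformCert δ C ST d) :
    UniformCert δ C ST (d + 1) :=
  stmt6_general δ C ST d h
end

section
/- Let Π = (δ, Σ, C) be an LCL problem. Let R be the smallest collection of nonempty subsets of Σ such that {σ} ∈ R for every σ ∈ Σ, and such that for all r_1, …, r_δ ∈ R, if the set r = {σ ∈ Σ : there is a configuration (σ : c_1, …, c_δ) ∈ C with c_i ∈ r_i for every i} is nonempty, then r ∈ R. Then Π has a uniform certificate for O(log* n) solvability with label set Σ_T = Σ (of some depth d ≥ 1) if and only if C ≠ ∅ and Σ ∈ R. -/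
/-- The smallest collection `R` of nonempty subsets of `Σ` containing all
singletons and closed under the following rule: for `r₁, …, r_δ ∈ R`, if the set
`r = {σ | ∃ (σ : c₁, …, c_δ) ∈ C with cᵢ ∈ rᵢ for all i}` is nonempty then
`r ∈ R`. -/
inductive CertSets {L : Type*} (δ : ℕ) (C : Set (L × (Fin δ → L))) : Set L → Prop
  | single (σ : L) : CertSets δ C {σ}
  | step (r : Fin δ → Set L) (h : ∀ i, CertSets δ C (r i))
      (hne : {σ : L | ∃ c : Fin δ → L, (σ, c) ∈ C ∧ ∀ i, c i ∈ r i}.Nonempty) :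
      CertSets δ C {σ : L | ∃ c : Fin δ → L, (σ, c) ∈ C ∧ ∀ i, c i ∈ r i}

/-!
Leaves fixed, the labels a node of height `n` can carry in a correct labeling form a set that is
obtained from the (singleton) leaf labels by `n` applications of the closure rule of `CertSets`;
at the root of a certificate with `Σ_T = Σ` this set is all of `Σ`. Conversely, a derivation of
`Σ ∈ R` is turned into a certificate by induction: certificates for `r₁, …, r_δ` are brought to a
common depth by padding below the leaves with configurations (which exist for every label once
`C ≠ ∅` and `Σ ∈ R`), and then grafted below a new root.
-/

namespace LCL

variable {L : Type*} {δ : ℕ} {C : Set (L × (Fin δ → L))}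

/-- A certificate for the labels in `r`, without the requirement that it only uses labels of `r`. -/
structure IsCertFamily (C : Set (L × (Fin δ → L))) (r : Set L) (d : ℕ)
    (T : L → List (Fin δ) → L) : Prop where
  root_eq : ∀ σ ∈ r, T σ [] = σ
  correct : ∀ σ ∈ r, CorrectLabeling δ C d (T σ)
  leaf_eq : ∀ σ ∈ r, ∀ σ' ∈ r, ∀ w : List (Fin δ), w.length = d → T σ w = T σ' w

theorem uniformCert_univ_iff {d : ℕ} :
    UniformCert δ C Set.univ d ↔ 1 ≤ d ∧ ∃ T, IsCertFamily C Set.univ d T := by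
  constructor
  · rintro ⟨hd, T, hcorr, -, hleaf, hroot⟩
    exact ⟨hd, T, hroot, hcorr, hleaf⟩
  · rintro ⟨hd, T, hroot, hcorr, hleaf⟩
    exact ⟨hd, T, hcorr, fun _ _ _ _ => Set.mem_univ _, hleaf, hroot⟩

section FeasibleLabels

/-- The labels that node `w` can carry in a correct labeling of the `n` levels below it whose
leaves are labeled as by `ℓ`. -/
def feasibleLabels (C : Set (L × (Fin δ → L))) (ℓ : List (Fin δ) → L) :
    ℕ → List (Fin δ) → Set L
  | 0, w => {ℓ w}
  | n + 1, w => {σ | ∃ c : Fin δ → L, (σ, c) ∈ C ∧ ∀ i, c i ∈ feasibleLabels C ℓ n (w ++ [i])}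

variable {d : ℕ} {ℓ T : List (Fin δ) → L}

theorem mem_feasibleLabels (hT : CorrectLabeling δ C d T)
    (hleaf : ∀ w : List (Fin δ), w.length = d → T w = ℓ w) :
    ∀ n (w : List (Fin δ)), w.length + n = d → T w ∈ feasibleLabels C ℓ n w
  | 0, w, hw => hleaf w (by omega)
  | n + 1, w, hw =>
    ⟨fun j => T (w ++ [j]), hT w (by omega),
      fun i => mem_feasibleLabels hT hleaf n (w ++ [i]) (by simp; omega)⟩

theorem certSets_feasibleLabels (hℓ : CorrectLabeling δ C d ℓ) :
    ∀ n (w : List (Fin δ)), w.length + n = d → CertSets δ C (feasibleLabels C ℓ n w)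
  | 0, w, _ => CertSets.single (ℓ w)
  | n + 1, w, hw =>
    CertSets.step _ (fun i => certSets_feasibleLabels hℓ n (w ++ [i]) (by simp; omega))
      ⟨ℓ w, mem_feasibleLabels hℓ (fun _ _ => rfl) (n + 1) w hw⟩

end FeasibleLabels

theorem IsCertFamily.certSets_univ [Nonempty L] {d : ℕ} {T : L → List (Fin δ) → L}
    (hT : IsCertFamily C Set.univ d T) : CertSets δ C Set.univ := by
  let σ₀ : L := Classical.arbitrary L
  have hcorr σ := hT.correct σ (Set.mem_univ σ)
  have huniv : feasibleLabels C (T σ₀) d [] = Set.univ := by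
    refine Set.eq_univ_of_forall fun σ => ?_
    rw [← hT.root_eq σ (Set.mem_univ σ)]
    exact mem_feasibleLabels (hcorr σ)
      (fun w hw => hT.leaf_eq σ (Set.mem_univ σ) σ₀ (Set.mem_univ σ₀) w hw) d [] (by simp)
  exact huniv ▸ certSets_feasibleLabels (hcorr σ₀) d [] (by simp)

theorem forall_exists_mem_of_certSets_univ (hC : C.Nonempty) (h : CertSets δ C Set.univ) :
    ∀ τ : L, ∃ c : Fin δ → L, (τ, c) ∈ C := by
  suffices ∀ s, CertSets δ C s → s = Set.univ → ∀ τ : L, ∃ c : Fin δ → L, (τ, c) ∈ C from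
    this _ h rfl
  rintro s (σ | ⟨r, -, -⟩) hs τ
  · obtain ⟨⟨a, c⟩, hac⟩ := hC
    have hτa : τ = a := by
      have h₁ : τ ∈ ({σ} : Set L) := hs ▸ Set.mem_univ τ
      have h₂ : a ∈ ({σ} : Set L) := hs ▸ Set.mem_univ a
      exact h₁.trans h₂.symm
    exact ⟨c, hτa ▸ hac⟩
  · obtain ⟨c, hc, -⟩ := hs ▸ Set.mem_univ τ
    exact ⟨c, hc⟩

section Padding

def extendBy (f : L → Fin δ → L) : L → List (Fin δ) → L
  | τ, [] => τ
  | τ, i :: w => extendBy f (f τ i) w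

theorem extendBy_append_singleton (f : L → Fin δ → L) (τ : L) (w : List (Fin δ)) (j : Fin δ) :
    extendBy f τ (w ++ [j]) = f (extendBy f τ w) j := by
  induction w generalizing τ with
  | nil => rfl
  | cons i w ih => exact ih (f τ i)

variable {f : L → Fin δ → L}

def padBy (f : L → Fin δ → L) (d : ℕ) (T : List (Fin δ) → L) (w : List (Fin δ)) : L :=
  extendBy f (T (w.take d)) (w.drop d)

theorem padBy_of_length_le {d : ℕ} (T : List (Fin δ) → L) {w : List (Fin δ)}
    (hw : w.length ≤ d) : padBy f d T w = T w := by
  simp [padBy, List.take_of_length_le hw, List.drop_eq_nil_of_le hw, extendBy]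

theorem correctLabeling_padBy (hf : ∀ τ, (τ, f τ) ∈ C) {d D : ℕ} {T : List (Fin δ) → L}
    (hT : CorrectLabeling δ C d T) : CorrectLabeling δ C D (padBy f d T) := by
  intro w _
  by_cases hwd : w.length < d
  · have hchild (j : Fin δ) : padBy f d T (w ++ [j]) = T (w ++ [j]) :=
      padBy_of_length_le T (by simp; omega)
    simpa only [padBy_of_length_le T hwd.le, hchild] using hT w hwd
  · have hchild (j : Fin δ) : padBy f d T (w ++ [j]) = f (padBy f d T w) j := by
      rw [padBy, List.take_append_of_le_length (by omega),
        List.drop_append_of_le_length (by omega), extendBy_append_singleton, padBy]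
    simpa only [hchild] using hf (padBy f d T w)

theorem IsCertFamily.padBy (hf : ∀ τ, (τ, f τ) ∈ C) {r : Set L} {d D : ℕ}
    {T : L → List (Fin δ) → L} (hT : IsCertFamily C r d T) (hdD : d ≤ D) :
    IsCertFamily C r D (fun σ => LCL.padBy f d (T σ)) where
  root_eq σ hσ := (padBy_of_length_le (T σ) (Nat.zero_le d)).trans (hT.root_eq σ hσ)
  correct σ hσ := correctLabeling_padBy hf (hT.correct σ hσ)
  leaf_eq σ hσ σ' hσ' w hw := by
    rw [LCL.padBy, LCL.padBy, hT.leaf_eq σ hσ σ' hσ' _ (by simp; omega)]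

end Padding

def graft (σ : L) (sub : Fin δ → List (Fin δ) → L) : List (Fin δ) → L
  | [] => σ
  | i :: w => sub i w

theorem correctLabeling_graft {σ : L} {sub : Fin δ → List (Fin δ) → L} {d : ℕ}
    (hroot : (σ, fun i => sub i []) ∈ C) (hsub : ∀ i, CorrectLabeling δ C d (sub i)) :
    CorrectLabeling δ C (d + 1) (graft σ sub)
  | [], _ => hroot
  | i :: w, hw => hsub i w (by simp at hw; omega)

theorem IsCertFamily.step {r : Fin δ → Set L} {D : ℕ} {T : Fin δ → L → List (Fin δ) → L}
    (hT : ∀ i, IsCertFamily C (r i) D (T i)) :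
    ∃ T', IsCertFamily C {σ | ∃ c : Fin δ → L, (σ, c) ∈ C ∧ ∀ i, c i ∈ r i} (D + 1) T' := by
  set S := {σ | ∃ c : Fin δ → L, (σ, c) ∈ C ∧ ∀ i, c i ∈ r i}
  have hsel (σ : L) : ∃ c : Fin δ → L, σ ∈ S → (σ, c) ∈ C ∧ ∀ i, c i ∈ r i := by
    by_cases hσ : σ ∈ S
    · exact hσ.imp fun c hc _ => hc
    · exact ⟨fun _ => σ, fun h => absurd h hσ⟩
  choose c hc using hsel
  refine ⟨fun σ => graft σ fun i => T i (c σ i), fun σ _ => rfl, fun σ hσ => ?_, ?_⟩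
  · refine correctLabeling_graft ?_ fun i => (hT i).correct _ ((hc σ hσ).2 i)
    convert (hc σ hσ).1 using 2
    exact funext fun i => (hT i).root_eq _ ((hc σ hσ).2 i)
  · rintro σ hσ σ' hσ' (_ | ⟨i, w⟩) hw
    · simp at hw
    · exact (hT i).leaf_eq _ ((hc σ hσ).2 i) _ ((hc σ' hσ').2 i) w (by simpa using hw)

theorem exists_isCertFamily_of_certSets {f : L → Fin δ → L} (hf : ∀ τ, (τ, f τ) ∈ C)
    {r : Set L} (h : CertSets δ C r) : ∃ d T, IsCertFamily C r d T := by
  induction h with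
  | single σ =>
    refine ⟨0, fun τ _ => τ, fun _ _ => rfl, fun _ _ _ hw => by omega, ?_⟩
    rintro τ rfl τ' rfl w -
    rfl
  | step r _ _ ih =>
    choose d T hT using ih
    have hpad (i : Fin δ) := (hT i).padBy hf (Finset.le_sup (f := d) (Finset.mem_univ i))
    exact ⟨_, IsCertFamily.step hpad⟩

end LCL

theorem stmt8_general {L : Type*} [Nonempty L] (δ : ℕ)
    (C : Set (L × (Fin δ → L))) :
    (∃ d : ℕ, UniformCert δ C Set.univ d) ↔
      (C.Nonempty ∧ CertSets δ C Set.univ) := by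
  simp only [LCL.uniformCert_univ_iff]
  constructor
  · rintro ⟨d, hd, T, hT⟩
    have hroot := hT.correct (Classical.arbitrary L) (Set.mem_univ _) [] hd
    exact ⟨⟨_, hroot⟩, hT.certSets_univ⟩
  · rintro ⟨hC, hU⟩
    choose f hf using LCL.forall_exists_mem_of_certSets_univ hC hU
    obtain ⟨d, T, hT⟩ := LCL.exists_isCertFamily_of_certSets hf hU
    exact ⟨d + 1, by omega, _, hT.padBy hf (Nat.le_succ d)⟩

/-- an LCL problem `Π = (δ, Σ, C)` has a uniform certificate for
`O(log* n)` solvability with label set `Σ_T = Σ` (of some depth `d ≥ 1`) if and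
only if `C ≠ ∅` and `Σ ∈ R`. -/
theorem stmt8 {L : Type*} [Fintype L] [Nonempty L] (δ : ℕ) (hδ : 1 ≤ δ)
    (C : Set (L × (Fin δ → L))) (hperm : PermClosed δ C) :
    (∃ d : ℕ, UniformCert δ C Set.univ d) ↔
      (C.Nonempty ∧ CertSets δ C Set.univ) :=
  stmt8_general δ C
end

section
/- Let Π = (δ, Σ, C) be an LCL problem and fix a ∈ Σ. Let R_a be the smallest collection of pairs (r, x), where r is a nonempty subset of Σ and x is a Boolean, such that ({σ}, [σ = a]) ∈ R_a for every σ ∈ Σ, and such that for all (r_1, x_1), …, (r_δ, x_δ) ∈ R_a, if the set r = {σ ∈ Σ : there is a configuration (σ : c_1, …, c_δ) ∈ C with c_i ∈ r_i for every i} is nonempty, then (r, x_1 ∨ ⋯ ∨ x_δ) ∈ R_a. Then Π has a uniform certificate for O(log* n) solvability with label set Σ_T = Σ in which at least one leaf is labeled a, if and only if C ≠ ∅ and (Σ, true) ∈ R_a. -/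
/-- A uniform certificate for `O(log* n)` solvability with label set `ST`, depth
`d ≥ 1`, in which at least one leaf is labeled `a` (all the trees of the family
agree on the labels of all leaves). -/
def UniformCertWithLeaf {L : Type*} (δ : ℕ) (C : Set (L × (Fin δ → L)))
    (ST : Set L) (d : ℕ) (a : L) : Prop :=
  1 ≤ d ∧
  ∃ T : L → List (Fin δ) → L,
    (∀ σ ∈ ST, CorrectLabeling δ C d (T σ)) ∧
    (∀ σ ∈ ST, ∀ w : List (Fin δ), w.length ≤ d → T σ w ∈ ST) ∧
    (∀ σ ∈ ST, ∀ σ' ∈ ST, ∀ w : List (Fin δ), w.length = d → T σ w = T σ' w) ∧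
    (∀ σ ∈ ST, T σ [] = σ) ∧
    (∃ w : List (Fin δ), w.length = d ∧ ∀ σ ∈ ST, T σ w = a)

/-- The smallest collection `R_a` of pairs `(r, x)`, with `r` a nonempty subset of
`Σ` and `x` a Boolean (encoded here as a proposition), containing all pairs
`({σ}, [σ = a])` and closed under the following rule: for
`(r₁, x₁), …, (r_δ, x_δ) ∈ R_a`, if the set
`r = {σ | ∃ (σ : c₁, …, c_δ) ∈ C with cᵢ ∈ rᵢ for all i}` is nonempty then
`(r, x₁ ∨ ⋯ ∨ x_δ) ∈ R_a`. -/
inductive CertSetsA {L : Type*} (δ : ℕ) (C : Set (L × (Fin δ → L))) (a : L) :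
    Set L → Prop → Prop
  | single (σ : L) : CertSetsA δ C a {σ} (σ = a)
  | step (r : Fin δ → Set L) (x : Fin δ → Prop)
      (h : ∀ i, CertSetsA δ C a (r i) (x i))
      (hne : {σ : L | ∃ c : Fin δ → L, (σ, c) ∈ C ∧ ∀ i, c i ∈ r i}.Nonempty) :
      CertSetsA δ C a {σ : L | ∃ c : Fin δ → L, (σ, c) ∈ C ∧ ∀ i, c i ∈ r i}
        (∃ i, x i)

namespace Stmt9Aux

variable {L : Type*}

/-- Filler tree: greedily descend using a chosen configuration. -/
def filler (δ : ℕ) (cc : L → Fin δ → L) : L → List (Fin δ) → L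
  | τ, [] => τ
  | τ, j :: v => filler δ cc (cc τ j) v

lemma filler_append (δ : ℕ) (cc : L → Fin δ → L) (τ : L) (v : List (Fin δ)) (j : Fin δ) :
    filler δ cc τ (v ++ [j]) = cc (filler δ cc τ v) j := by
  induction v generalizing τ with
  | nil => rfl
  | cons i v ih => simpa [filler] using ih (cc τ i)

lemma filler_correct (δ : ℕ) (C : Set (L × (Fin δ → L))) (cc : L → Fin δ → L)
    (hcc : ∀ σ, (σ, cc σ) ∈ C) (τ : L) (v : List (Fin δ)) :
    (filler δ cc τ v, fun j => filler δ cc τ (v ++ [j])) ∈ C := by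
  have h : (fun j => filler δ cc τ (v ++ [j])) = cc (filler δ cc τ v) :=
    funext fun j => filler_append δ cc τ v j
  rw [h]; exact hcc _

/-- Tree following an infinite path `p` along the `z`-children, filled elsewhere. -/
def pathTree (δ : ℕ) (cc : L → Fin δ → L) (nc : L → L → Fin δ → L) (z : Fin δ)
    (p : ℕ → L) : ℕ → List (Fin δ) → L
  | t, [] => p t
  | t, j :: v => if j = z then pathTree δ cc nc z p (t+1) v
      else filler δ cc (nc (p t) (p (t+1)) j) v

lemma pathTree_replicate (δ : ℕ) (cc : L → Fin δ → L) (nc : L → L → Fin δ → L)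
    (z : Fin δ) (p : ℕ → L) (m t : ℕ) :
    pathTree δ cc nc z p t (List.replicate m z) = p (t + m) := by
  induction m generalizing t with
  | zero => rfl
  | succ m ih =>
    rw [List.replicate_succ]
    simp only [pathTree, if_pos rfl]
    rw [ih (t+1), show t + 1 + m = t + (m + 1) by omega]
    simp

lemma pathTree_correct (δ : ℕ) (C : Set (L × (Fin δ → L))) (cc : L → Fin δ → L)
    (nc : L → L → Fin δ → L) (z : Fin δ) (p : ℕ → L)
    (hcc : ∀ σ, (σ, cc σ) ∈ C) (hnc : ∀ σ τ, (σ, nc σ τ) ∈ C)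
    (hz : ∀ t, nc (p t) (p (t+1)) z = p (t+1)) :
    ∀ (v : List (Fin δ)) (t : ℕ),
      (pathTree δ cc nc z p t v, fun j => pathTree δ cc nc z p t (v ++ [j])) ∈ C := by
  intro v
  induction v with
  | nil =>
    intro t
    have h : (fun j => pathTree δ cc nc z p t ([] ++ [j])) = nc (p t) (p (t+1)) := by
      funext j
      by_cases hj : j = z
      · subst hj; simp [pathTree, hz t]
      · simp [pathTree, filler, hj]
    rw [show pathTree δ cc nc z p t [] = p t from rfl, h]
    exact hnc _ _
  | cons j v ih =>
    intro t
    by_cases hj : j = z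
    · subst hj
      simpa [pathTree] using ih (t+1)
    · simpa [pathTree, hj] using
        filler_correct δ C cc hcc (nc (p t) (p (t+1)) j) v

/-- Extend a finite edge-path by greedy descent. -/
def extPath (δ : ℕ) (cc : L → Fin δ → L) (z : Fin δ) (p : ℕ → L) (k : ℕ) : ℕ → L
  | 0 => p 0
  | t+1 => if t + 1 ≤ k then p (t+1) else cc (extPath δ cc z p k t) z

lemma extPath_of_le (δ : ℕ) (cc : L → Fin δ → L) (z : Fin δ) (p : ℕ → L) (k t : ℕ)
    (h : t ≤ k) : extPath δ cc z p k t = p t := by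
  cases t with
  | zero => rfl
  | succ t => simp [extPath, h]

lemma extPath_edge (δ : ℕ) (C : Set (L × (Fin δ → L))) (cc : L → Fin δ → L)
    (z : Fin δ) (p : ℕ → L) (k : ℕ) (hcc : ∀ σ, (σ, cc σ) ∈ C)
    (hfin : ∀ t < k, ∃ c, (p t, c) ∈ C ∧ c z = p (t+1)) :
    ∀ t, ∃ c, (extPath δ cc z p k t, c) ∈ C ∧ c z = extPath δ cc z p k (t+1) := by
  intro t
  by_cases h : t + 1 ≤ k
  · rw [extPath_of_le δ cc z p k t (by omega), extPath_of_le δ cc z p k (t+1) h]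
    exact hfin t (by omega)
  · have he : extPath δ cc z p k (t+1) = cc (extPath δ cc z p k t) z := by
      simp [extPath, h]
    rw [he]
    exact ⟨cc (extPath δ cc z p k t), hcc _, rfl⟩

lemma paths (δ : ℕ) (C : Set (L × (Fin δ → L))) (hperm : PermClosed δ C) (a : L)
    (z : Fin δ) {r : Set L} {x : Prop} (h : CertSetsA δ C a r x) :
    x → ∃ k, ∀ σ ∈ r, ∃ p : ℕ → L,
      p 0 = σ ∧ p k = a ∧ ∀ t < k, ∃ c, (p t, c) ∈ C ∧ c z = p (t+1) := by
  induction h with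
  | single σ =>
    intro hx
    refine ⟨0, fun τ hτ => ⟨fun _ => τ, rfl, ?_, fun t ht => absurd ht (Nat.not_lt_zero t)⟩⟩
    rw [Set.mem_singleton_iff] at hτ
    rw [hτ, hx]
  | step r' x' hchild hne ih =>
    intro hx
    obtain ⟨i, hxi⟩ := hx
    obtain ⟨k, hk⟩ := ih i hxi
    refine ⟨k + 1, fun σ hσ => ?_⟩
    obtain ⟨c, hcC, hci⟩ := hσ
    obtain ⟨p, hp0, hpk, hpe⟩ := hk (c i) (hci i)
    refine ⟨fun t => match t with | 0 => σ | t+1 => p t, rfl, hpk, ?_⟩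
    intro t ht
    match t with
    | 0 =>
      refine ⟨c ∘ Equiv.swap z i, hperm σ c _ hcC, ?_⟩
      show c (Equiv.swap z i z) = p 0
      rw [Equiv.swap_apply_left, hp0]
    | t+1 => exact hpe t (by omega)

lemma realize (δ : ℕ) (C : Set (L × (Fin δ → L))) (a : L)
    (cc : L → Fin δ → L) (hcc : ∀ σ, (σ, cc σ) ∈ C)
    {r : Set L} {x : Prop} (h : CertSetsA δ C a r x) :
    ∃ d₀ : ℕ, ∀ d ≥ d₀, ∃ ℓ : List (Fin δ) → L, ∀ σ ∈ r, ∃ T : List (Fin δ) → L,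
      CorrectLabeling δ C d T ∧ T [] = σ ∧ ∀ w : List (Fin δ), w.length = d → T w = ℓ w := by
  induction h with
  | single σ =>
    refine ⟨0, fun d _ => ⟨filler δ cc σ, fun τ hτ => ?_⟩⟩
    rw [Set.mem_singleton_iff] at hτ; subst hτ
    exact ⟨filler δ cc τ, fun w _ => filler_correct δ C cc hcc τ w, rfl, fun w _ => rfl⟩
  | step r' x' hchild hne ih =>
    choose d0 hd0 using ih
    refine ⟨(Finset.univ.sup d0) + 1, fun d hd => ?_⟩
    have hd1 : 1 ≤ d := le_trans (Nat.le_add_left 1 _) hd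
    have hdi : ∀ i, d - 1 ≥ d0 i := fun i => by
      have := Finset.le_sup (f := d0) (Finset.mem_univ i); omega
    choose ℓs hℓs using fun i => hd0 i (d-1) (hdi i)
    choose Ts hT1 hT2 hT3 using hℓs
    refine ⟨fun w => match w with | [] => a | j :: v => ℓs j v, ?_⟩
    rintro σ ⟨c, hcC, hci⟩
    refine ⟨fun w => match w with | [] => σ | j :: v => Ts j (c j) (hci j) v, ?_, rfl, ?_⟩
    · intro w hw
      cases w with
      | nil =>
        show (σ, fun j : Fin δ => Ts j (c j) (hci j) []) ∈ C
        have hc' : (fun j : Fin δ => Ts j (c j) (hci j) []) = c :=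
          funext fun j => hT2 j (c j) (hci j)
        rw [hc']
        exact hcC
      | cons j v =>
        have hv : v.length < d - 1 := by
          simp only [List.length_cons] at hw; omega
        exact hT1 j (c j) (hci j) v hv
    · intro w hw
      cases w with
      | nil => simp only [List.length_nil] at hw; omega
      | cons j v =>
        have hv : v.length = d - 1 := by
          simp only [List.length_cons] at hw; omega
        exact hT3 j (c j) (hci j) v hv

lemma fert_cases (δ : ℕ) (C : Set (L × (Fin δ → L))) (a : L) {r : Set L} {x : Prop}
    (h : CertSetsA δ C a r x) :
    (∀ σ ∈ r, ∃ c, (σ, c) ∈ C) ∨ ∃ τ, r = {τ} := by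
  cases h with
  | single σ => exact Or.inr ⟨σ, rfl⟩
  | step r' x' hchild hne =>
    refine Or.inl fun σ hσ => ?_
    obtain ⟨c, h1, _⟩ := hσ
    exact ⟨c, h1⟩

/-- Glue a depth-`d₀` tree with padding gadgets below each leaf. -/
def glue (δ : ℕ) (d₀ : ℕ) (T' : List (Fin δ) → L)
    (pad : List (Fin δ) → List (Fin δ) → L) : List (Fin δ) → L :=
  fun w => if w.length ≤ d₀ then T' w else pad (w.take d₀) (w.drop d₀)

lemma glue_of_le {δ d₀ : ℕ} {T' : List (Fin δ) → L} {pad : List (Fin δ) → List (Fin δ) → L}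
    {w : List (Fin δ)} (h : w.length ≤ d₀) : glue δ d₀ T' pad w = T' w := if_pos h

lemma glue_of_gt {δ d₀ : ℕ} {T' : List (Fin δ) → L} {pad : List (Fin δ) → List (Fin δ) → L}
    {w : List (Fin δ)} (h : ¬ w.length ≤ d₀) :
    glue δ d₀ T' pad w = pad (w.take d₀) (w.drop d₀) := if_neg h

lemma glue_correct (δ : ℕ) (C : Set (L × (Fin δ → L))) (d₀ : ℕ)
    (T' : List (Fin δ) → L) (pad : List (Fin δ) → List (Fin δ) → L)
    (hT : CorrectLabeling δ C d₀ T')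
    (hleaf : ∀ w : List (Fin δ), w.length = d₀ → T' w = pad w [])
    (hpad : ∀ u : List (Fin δ), u.length = d₀ →
      ∀ v : List (Fin δ), (pad u v, fun j => pad u (v ++ [j])) ∈ C) :
    ∀ w : List (Fin δ), (glue δ d₀ T' pad w, fun j => glue δ d₀ T' pad (w ++ [j])) ∈ C := by
  intro w
  rcases lt_trichotomy w.length d₀ with h1 | h1 | h1
  · rw [glue_of_le (le_of_lt h1)]
    have hc : (fun j => glue δ d₀ T' pad (w ++ [j])) = fun j => T' (w ++ [j]) :=
      funext fun j => glue_of_le (by simp; omega)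
    rw [hc]
    exact hT w h1
  · rw [glue_of_le (le_of_eq h1), hleaf w h1]
    have hc : (fun j => glue δ d₀ T' pad (w ++ [j])) = fun j => pad w ([] ++ [j]) := by
      funext j
      rw [glue_of_gt (by simp; omega), List.take_append_of_le_length (by omega),
        List.drop_append_of_le_length (by omega), ← h1, List.take_length, List.drop_length]
    rw [hc]
    exact hpad w h1 []
  · rw [glue_of_gt (by omega)]
    have hc : (fun j => glue δ d₀ T' pad (w ++ [j]))
        = fun j => pad (w.take d₀) (w.drop d₀ ++ [j]) := by
      funext j
      rw [glue_of_gt (by simp; omega), List.take_append_of_le_length (by omega),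
        List.drop_append_of_le_length (by omega)]
    rw [hc]
    exact hpad (w.take d₀) (by rw [List.length_take]; omega) (w.drop d₀)

end Stmt9Aux
namespace Stmt9Aux

def Rr {L : Type*} (δ : ℕ) (C : Set (L × (Fin δ → L))) (T0 : List (Fin δ) → L) :
    ℕ → List (Fin δ) → Set L
  | 0, w => {T0 w}
  | m+1, w => {σ | ∃ c : Fin δ → L, (σ, c) ∈ C ∧ ∀ i, c i ∈ Rr δ C T0 m (w ++ [i])}

def Xx {L : Type*} (δ : ℕ) (a : L) (T0 : List (Fin δ) → L) :
    ℕ → List (Fin δ) → Prop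
  | 0, w => T0 w = a
  | m+1, w => ∃ i : Fin δ, Xx δ a T0 m (w ++ [i])

lemma Rr_zero {L : Type*} (δ : ℕ) (C : Set (L × (Fin δ → L))) (T0 : List (Fin δ) → L)
    (w : List (Fin δ)) : Rr δ C T0 0 w = {T0 w} := rfl

lemma Rr_succ {L : Type*} (δ : ℕ) (C : Set (L × (Fin δ → L))) (T0 : List (Fin δ) → L)
    (m : ℕ) (w : List (Fin δ)) :
    Rr δ C T0 (m+1) w = {σ | ∃ c : Fin δ → L, (σ, c) ∈ C ∧ ∀ i, c i ∈ Rr δ C T0 m (w ++ [i])} :=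
  rfl

lemma Xx_zero {L : Type*} (δ : ℕ) (a : L) (T0 : List (Fin δ) → L) (w : List (Fin δ)) :
    Xx δ a T0 0 w = (T0 w = a) := rfl

lemma Xx_succ {L : Type*} (δ : ℕ) (a : L) (T0 : List (Fin δ) → L) (m : ℕ) (w : List (Fin δ)) :
    Xx δ a T0 (m+1) w = ∃ i : Fin δ, Xx δ a T0 m (w ++ [i]) := rfl

end Stmt9Aux


open Stmt9Aux

/-- an LCL problem `Π = (δ, Σ, C)` has a uniform certificate for
`O(log* n)` solvability with label set `Σ_T = Σ` in which at least one leaf is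
labeled `a` if and only if `C ≠ ∅` and `(Σ, true) ∈ R_a`. -/
theorem stmt9 {L : Type*} [Fintype L] [Nonempty L] (δ : ℕ) (hδ : 1 ≤ δ)
    (C : Set (L × (Fin δ → L))) (hperm : PermClosed δ C) (a : L) :
    (∃ d : ℕ, UniformCertWithLeaf δ C Set.univ d a) ↔
      (C.Nonempty ∧ CertSetsA δ C a Set.univ True) := by
  obtain ⟨σ₀⟩ := ‹Nonempty L›
  have z : Fin δ := ⟨0, hδ⟩
  constructor
  · rintro ⟨d, hd1, T, hcorr, hmem, hagree, hroot, w₀, hw₀len, hw₀a⟩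
    have hCne : C.Nonempty := ⟨_, hcorr σ₀ trivial [] hd1⟩
    refine ⟨hCne, ?_⟩
    have claim2 : ∀ m (w : List (Fin δ)), m + w.length = d →
        ∀ σ : L, T σ w ∈ Rr δ C (T σ₀) m w := by
      intro m
      induction m with
      | zero =>
        intro w hw σ
        rw [Rr_zero, Set.mem_singleton_iff]
        exact hagree σ trivial σ₀ trivial w (by omega)
      | succ m ih =>
        intro w hw σ
        rw [Rr_succ]
        exact ⟨fun j => T σ (w ++ [j]), hcorr σ trivial w (by omega),
          fun i => ih (w ++ [i]) (by simp; omega) σ⟩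
    have claim1 : ∀ m (w : List (Fin δ)), m + w.length = d →
        CertSetsA δ C a (Rr δ C (T σ₀) m w) (Xx δ a (T σ₀) m w) := by
      intro m
      induction m with
      | zero =>
        intro w hw
        rw [Rr_zero, Xx_zero]
        exact CertSetsA.single _
      | succ m ih =>
        intro w hw
        rw [Rr_succ, Xx_succ]
        exact CertSetsA.step _ _ (fun i => ih (w ++ [i]) (by simp; omega))
          ⟨T σ₀ w, claim2 (m+1) w hw σ₀⟩
    have claim4 : ∀ m (w v : List (Fin δ)), m + w.length = d → v.length = m →
        T σ₀ (w ++ v) = a → Xx δ a (T σ₀) m w := by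
      intro m
      induction m with
      | zero =>
        intro w v hw hv ha
        rw [Xx_zero]
        rwa [List.length_eq_zero_iff.mp hv, List.append_nil] at ha
      | succ m ih =>
        intro w v hw hv ha
        rw [Xx_succ]
        cases v with
        | nil => simp at hv
        | cons j v' =>
          refine ⟨j, ih (w ++ [j]) v' (by simp; omega) (by simpa using hv) ?_⟩
          rwa [List.append_cons] at ha
    have hx : Xx δ a (T σ₀) d [] :=
      claim4 d [] w₀ (by simp) hw₀len (by rw [List.nil_append]; exact hw₀a σ₀ trivial)
    have hr : Rr δ C (T σ₀) d [] = Set.univ := Set.eq_univ_of_forall fun σ => by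
      have h2 := claim2 d [] (by simp) σ
      rwa [hroot σ trivial] at h2
    have h1 := claim1 d [] (by simp)
    rwa [hr, eq_true hx] at h1
  · rintro ⟨hCne, hR⟩
    have hfert : ∀ σ : L, ∃ c, (σ, c) ∈ C := by
      rcases fert_cases δ C a hR with h | ⟨τ, hτ⟩
      · exact fun σ => h σ trivial
      · intro σ
        obtain ⟨⟨σ₁, c₁⟩, hc₁⟩ := hCne
        have hσ : σ ∈ ({τ} : Set L) := by rw [← hτ]; trivial
        have hσ₁ : σ₁ ∈ ({τ} : Set L) := by rw [← hτ]; trivial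
        rw [Set.mem_singleton_iff] at hσ hσ₁
        exact ⟨c₁, by rw [hσ, ← hσ₁]; exact hc₁⟩
    set cc : L → Fin δ → L := fun σ => (hfert σ).choose with hccdef
    have hcc : ∀ σ, (σ, cc σ) ∈ C := fun σ => (hfert σ).choose_spec
    obtain ⟨k₀, hk₀⟩ := paths δ C hperm a z hR trivial
    obtain ⟨k, hk1, hk⟩ : ∃ k, 1 ≤ k ∧ ∀ σ : L, ∃ p : ℕ → L,
        p 0 = σ ∧ p k = a ∧ ∀ t < k, ∃ c, (p t, c) ∈ C ∧ c z = p (t+1) := by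
      rcases Nat.eq_zero_or_pos k₀ with h0 | hpos
      · subst h0
        have hall : ∀ σ : L, σ = a := by
          intro σ
          obtain ⟨p, hp0, hpk, _⟩ := hk₀ σ trivial
          exact hp0.symm.trans hpk
        refine ⟨1, le_refl 1, fun σ => ⟨fun _ => a, (hall σ).symm, rfl, ?_⟩⟩
        intro t ht
        exact ⟨cc a, hcc a, hall _⟩
      · exact ⟨k₀, hpos, fun σ => hk₀ σ trivial⟩
    have hpaths : ∀ σ : L, ∃ p : ℕ → L, p 0 = σ ∧ p k = a ∧
        ∀ t, ∃ c, (p t, c) ∈ C ∧ c z = p (t+1) := by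
      intro σ
      obtain ⟨p, hp0, hpk, hpe⟩ := hk σ
      refine ⟨extPath δ cc z p k, ?_, ?_, extPath_edge δ C cc z p k hcc hpe⟩
      · rw [extPath_of_le δ cc z p k 0 (by omega)]; exact hp0
      · rw [extPath_of_le δ cc z p k k le_rfl]; exact hpk
    choose P hP0 hPk hPe using hpaths
    have hncex : ∀ σ τ : L, ∃ c, (σ, c) ∈ C ∧
        ((∃ c', (σ, c') ∈ C ∧ c' z = τ) → c z = τ) := by
      intro σ τ
      by_cases h : ∃ c', (σ, c') ∈ C ∧ c' z = τ
      · obtain ⟨c, h1, h2⟩ := h; exact ⟨c, h1, fun _ => h2⟩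
      · exact ⟨cc σ, hcc σ, fun h' => absurd h' h⟩
    choose nc hnc hncz' using hncex
    have hncz : ∀ σ t, nc (P σ t) (P σ (t+1)) z = P σ (t+1) :=
      fun σ t => hncz' _ _ (hPe σ t)
    obtain ⟨d₀, hreal⟩ := realize δ C a cc hcc hR
    obtain ⟨ℓ, hℓ⟩ := hreal d₀ le_rfl
    choose T' hT'corr hT'root hT'leaf using fun σ => hℓ σ trivial
    set pad : List (Fin δ) → List (Fin δ) → L :=
      fun u v => pathTree δ cc nc z (P (ℓ u)) 0 v with hpaddef
    have hpad : ∀ u : List (Fin δ), u.length = d₀ →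
        ∀ v : List (Fin δ), (pad u v, fun j => pad u (v ++ [j])) ∈ C :=
      fun u _ v => pathTree_correct δ C cc nc z (P (ℓ u)) hcc
        (fun σ τ => hnc σ τ) (fun t => hncz (ℓ u) t) v 0
    have hleafpad : ∀ σ : L, ∀ w : List (Fin δ), w.length = d₀ → T' σ w = pad w [] := by
      intro σ w hw
      have : pad w [] = P (ℓ w) 0 := rfl
      rw [this, hP0, hT'leaf σ w hw]
    refine ⟨d₀ + k, ⟨by omega, fun σ => glue δ d₀ (T' σ) pad, ?_, ?_, ?_, ?_, ?_⟩⟩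
    · intro σ _ w _
      exact glue_correct δ C d₀ (T' σ) pad (hT'corr σ) (hleafpad σ) hpad w
    · exact fun _ _ _ _ => trivial
    · intro σ _ σ' _ w hw
      show glue δ d₀ (T' σ) pad w = glue δ d₀ (T' σ') pad w
      rw [glue_of_gt (by omega), glue_of_gt (by omega)]
    · intro σ _
      show glue δ d₀ (T' σ) pad [] = σ
      rw [glue_of_le (by simp)]
      exact hT'root σ
    · refine ⟨List.replicate (d₀ + k) z, by simp, fun σ _ => ?_⟩
      show glue δ d₀ (T' σ) pad (List.replicate (d₀ + k) z) = a
      rw [glue_of_gt (by simp; omega)]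
      have ht : (List.replicate (d₀ + k) z).take d₀ = List.replicate d₀ z := by
        rw [List.take_replicate]; congr 1; omega
      have hdrp : (List.replicate (d₀ + k) z).drop d₀ = List.replicate k z := by
        rw [List.drop_replicate]; congr 1; omega
      rw [ht, hdrp]
      show pathTree δ cc nc z (P (ℓ (List.replicate d₀ z))) 0 (List.replicate k z) = a
      rw [pathTree_replicate]
      simpa using hPk (ℓ (List.replicate d₀ z))
end

section
/- Let T be a finite rooted tree with n ≥ 1 vertices and let s > 0 be a real number. For a vertex v, let N_v denote the number of vertices of the subtree rooted at v. Then the number of vertices v that have at least two children u with N_u > s is strictly less than n/s. -/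
open Function

/-- `subtreeCard par v` is `N_v`: the number of vertices of the subtree rooted
at `v`, i.e. of `{u | ∃ m, par^[m] u = v}`. -/
noncomputable def subtreeCard {V : Type*} (par : V → V) (v : V) : ℕ :=
  {u : V | ∃ m : ℕ, par^[m] u = v}.ncard

section Aux

open Finset

variable {V : Type*} [Fintype V] {par : V → V} {r : V}
set_option linter.unusedSectionVars false

open Classical in
/-- The subtree rooted at `v`, as a `Finset`. -/
noncomputable def subF (par : V → V) (v : V) : Finset V :=
  Finset.univ.filter (fun u => ∃ m : ℕ, par^[m] u = v)

lemma mem_subF {u v : V} : u ∈ subF par v ↔ ∃ m : ℕ, par^[m] u = v := by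
  classical
  simp [subF]

lemma self_mem_subF (v : V) : v ∈ subF par v := mem_subF.2 ⟨0, rfl⟩

lemma subtreeCard_eq (par : V → V) (v : V) :
    subtreeCard par v = (subF par v).card := by
  classical
  rw [subtreeCard, ← Set.ncard_coe_finset]
  congr 1
  ext u
  simp [mem_subF]

lemma subF_subset {a b : V} (h : a ∈ subF par b) : subF par a ⊆ subF par b := by
  obtain ⟨m, hm⟩ := mem_subF.1 h
  intro x hx
  obtain ⟨k, hk⟩ := mem_subF.1 hx
  exact mem_subF.2 ⟨m + k, by rw [Function.iterate_add_apply, hk, hm]⟩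

lemma eq_root_of_cycle (hroot : par r = r) (hreach : ∀ v : V, ∃ m : ℕ, par^[m] v = r)
    {x : V} {m : ℕ} (h : par^[m] x = x) (hm : 1 ≤ m) : x = r := by
  obtain ⟨k, hk⟩ := hreach x
  have hx : par^[m * k] x = x := by
    rw [Function.iterate_mul]
    exact Function.iterate_fixed h k
  have hkm : k ≤ m * k := Nat.le_mul_of_pos_left k hm
  calc x = par^[m * k] x := hx.symm
    _ = par^[m * k - k] (par^[k] x) := by
        rw [← Function.iterate_add_apply, Nat.sub_add_cancel hkm]
    _ = r := by rw [hk]; exact Function.iterate_fixed hroot _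

lemma anc_antisymm (hroot : par r = r) (hreach : ∀ v : V, ∃ m : ℕ, par^[m] v = r)
    {a b : V} (hab : a ∈ subF par b) (hba : b ∈ subF par a) : a = b := by
  obtain ⟨m, hm⟩ := mem_subF.1 hab
  obtain ⟨k, hk⟩ := mem_subF.1 hba
  rcases Nat.eq_zero_or_pos (k + m) with h0 | h1
  · have : m = 0 := by omega
    rw [this] at hm; exact hm
  · have hcyc : par^[k + m] a = a := by
      rw [Function.iterate_add_apply, hm, hk]
    have har : a = r := eq_root_of_cycle hroot hreach hcyc h1
    have hbr : b = r := by
      rw [← hm, har]; exact Function.iterate_fixed hroot m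
    rw [har, hbr]

lemma anc_comparable {x a b : V} (ha : x ∈ subF par a) (hb : x ∈ subF par b) :
    a ∈ subF par b ∨ b ∈ subF par a := by
  obtain ⟨m, hm⟩ := mem_subF.1 ha
  obtain ⟨k, hk⟩ := mem_subF.1 hb
  rcases le_total m k with h | h
  · left
    exact mem_subF.2 ⟨k - m, by rw [← hm, ← Function.iterate_add_apply, Nat.sub_add_cancel h, hk]⟩
  · right
    exact mem_subF.2 ⟨m - k, by rw [← hk, ← Function.iterate_add_apply, Nat.sub_add_cancel h, hm]⟩

lemma sibling_not_anc (hroot : par r = r) (hreach : ∀ v : V, ∃ m : ℕ, par^[m] v = r)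
    {v c₁ c₂ : V} (h1 : par c₁ = v) (h2 : par c₂ = v) (h2v : c₂ ≠ v)
    (hne : c₁ ≠ c₂) (h : c₁ ∈ subF par c₂) : False := by
  obtain ⟨m, hm⟩ := mem_subF.1 h
  rcases Nat.eq_zero_or_pos m with h0 | h1m
  · rw [h0] at hm; exact hne hm
  · have hv : par^[m] v = v := by
      conv_lhs => rw [← h1]
      rw [← Function.iterate_succ_apply, Function.iterate_succ_apply', hm, h2]
    have hvr : v = r := eq_root_of_cycle hroot hreach hv h1m
    have hc2 : c₂ = r := by
      rw [← hm, ← Nat.sub_add_cancel h1m, Function.iterate_add_apply,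
        Function.iterate_one, h1, hvr]
      exact Function.iterate_fixed hroot _
    exact h2v (by rw [hc2, hvr])

lemma sibling_disjoint (hroot : par r = r) (hreach : ∀ v : V, ∃ m : ℕ, par^[m] v = r)
    {v c₁ c₂ : V} (h1 : par c₁ = v) (h1v : c₁ ≠ v) (h2 : par c₂ = v) (h2v : c₂ ≠ v)
    (hne : c₁ ≠ c₂) : Disjoint (subF par c₁) (subF par c₂) := by
  rw [Finset.disjoint_left]
  intro x hx1 hx2
  rcases anc_comparable hx1 hx2 with h | h
  · exact sibling_not_anc hroot hreach h1 h2 h2v hne h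
  · exact sibling_not_anc hroot hreach h2 h1 h1v hne.symm h

end Aux

/-- in a finite rooted tree with `n ≥ 1` vertices, for any real
`s > 0`, the number of vertices having at least two children `u` with `N_u > s`
is strictly less than `n / s`. -/
theorem stmt11 {V : Type*} [Fintype V]
    (par : V → V) (r : V) (hroot : par r = r)
    (hnr : ∀ v : V, v ≠ r → par v ≠ v)
    (hreach : ∀ v : V, ∃ m : ℕ, par^[m] v = r)
    (n : ℕ) (hn : n = Fintype.card V) (hn1 : 1 ≤ n)
    (s : ℝ) (hs : 0 < s) :
    (({v : V | ∃ u₁ u₂ : V, u₁ ≠ u₂ ∧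
        (u₁ ≠ v ∧ par u₁ = v) ∧ (u₂ ≠ v ∧ par u₂ = v) ∧
        s < (subtreeCard par u₁ : ℝ) ∧ s < (subtreeCard par u₂ : ℝ)}).ncard : ℝ)
      < (n : ℝ) / s := by
  classical
  open Finset in
  -- heavy vertices
  set H : Finset V := Finset.univ.filter (fun u => s < (subtreeCard par u : ℝ)) with hH
  have mem_H : ∀ u : V, u ∈ H ↔ s < (subtreeCard par u : ℝ) := by
    intro u; simp [hH]
  -- the key function (lexicographic (N, index))
  set C : ℕ := Fintype.card V with hC
  have hC1 : 1 ≤ C := by omega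
  set e : V ≃ Fin C := Fintype.equivFin V with he
  set key : V → ℕ := fun w => subtreeCard par w * C + (e w : ℕ) with hkey
  have hkeyN : ∀ w w' : V, key w ≤ key w' → subtreeCard par w ≤ subtreeCard par w' := by
    intro w w' h
    by_contra h'
    push_neg at h'
    have h1 : key w' < key w := by
      calc key w' = subtreeCard par w' * C + (e w' : ℕ) := rfl
        _ < (subtreeCard par w' + 1) * C := by
            have := (e w').isLt; simp only [add_mul, one_mul]; omega
        _ ≤ subtreeCard par w * C := Nat.mul_le_mul_right _ (by omega)
        _ ≤ key w := Nat.le_add_right _ _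
    omega
  have hkeyinj : ∀ w w' : V, key w = key w' → w = w' := by
    intro w w' h
    have h1 : subtreeCard par w = subtreeCard par w' :=
      le_antisymm (hkeyN w w' h.le) (hkeyN w' w h.ge)
    have h2 : (e w : ℕ) = (e w' : ℕ) := by
      simp only [hkey, h1] at h; omega
    have : e w = e w' := Fin.ext h2
    exact e.injective this
  -- the minimal heavy vertex in the subtree of u
  have hmin : ∀ u : V, ∃ w : V, (H ∩ subF par u).Nonempty →
      w ∈ H ∩ subF par u ∧ ∀ w' ∈ H ∩ subF par u, key w ≤ key w' := by
    intro u
    by_cases h : (H ∩ subF par u).Nonempty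
    · obtain ⟨w, hw, hwmin⟩ := Finset.exists_min_image _ key h
      exact ⟨w, fun _ => ⟨hw, hwmin⟩⟩
    · exact ⟨r, fun h' => absurd h' h⟩
  choose Λ hΛ using hmin
  -- basic facts about Λ
  have hΛmem : ∀ u : V, u ∈ H → Λ u ∈ H ∩ subF par u := by
    intro u hu
    exact (hΛ u ⟨u, Finset.mem_inter.2 ⟨hu, self_mem_subF u⟩⟩).1
  have hΛmin : ∀ u : V, u ∈ H → ∀ w' ∈ H ∩ subF par u, key (Λ u) ≤ key w' := by
    intro u hu
    exact (hΛ u ⟨u, Finset.mem_inter.2 ⟨hu, self_mem_subF u⟩⟩).2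
  -- nestedness : if Λ u' lies in the subtree of u ⊆ subtree of u', they agree
  have hnest : ∀ u u' : V, u ∈ H → u' ∈ H → subF par u ⊆ subF par u' →
      Λ u' ∈ subF par u → Λ u = Λ u' := by
    intro u u' hu hu' hsub hmem
    apply hkeyinj
    apply le_antisymm
    · exact hΛmin u hu _ (Finset.mem_inter.2 ⟨(Finset.mem_inter.1 (hΛmem u' hu')).1, hmem⟩)
    · exact hΛmin u' hu' _ (Finset.mem_inter.2
        ⟨(Finset.mem_inter.1 (hΛmem u hu)).1, hsub (Finset.mem_inter.1 (hΛmem u hu)).2⟩)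
  -- Λ u is an H-leaf: no other heavy vertices in its subtree
  have hleaf : ∀ u : V, u ∈ H → ∀ w : V, w ∈ H → w ∈ subF par (Λ u) → w = Λ u := by
    intro u hu w hw hmem
    have hΛu := hΛmem u hu
    have hΛsub : subF par (Λ u) ⊆ subF par u := subF_subset (Finset.mem_inter.1 hΛu).2
    have hwu : w ∈ subF par u := hΛsub hmem
    have hk : key (Λ u) ≤ key w := hΛmin u hu w (Finset.mem_inter.2 ⟨hw, hwu⟩)
    have hN1 : subtreeCard par (Λ u) ≤ subtreeCard par w := hkeyN _ _ hk
    have hsub : subF par w ⊆ subF par (Λ u) := subF_subset hmem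
    have hN2 : (subF par w).card ≤ (subF par (Λ u)).card := Finset.card_le_card hsub
    rw [← subtreeCard_eq, ← subtreeCard_eq] at hN2
    have heqset : subF par w = subF par (Λ u) := by
      apply Finset.eq_of_subset_of_card_le hsub
      rw [← subtreeCard_eq, ← subtreeCard_eq]
      omega
    have : Λ u ∈ subF par w := heqset ▸ self_mem_subF (Λ u)
    exact anc_antisymm hroot hreach hmem this
  -- the branching set
  set P : V → Prop := fun v => ∃ u₁ u₂ : V, u₁ ≠ u₂ ∧
      (u₁ ≠ v ∧ par u₁ = v) ∧ (u₂ ≠ v ∧ par u₂ = v) ∧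
      s < (subtreeCard par u₁ : ℝ) ∧ s < (subtreeCard par u₂ : ℝ) with hP
  set BF : Finset V := Finset.univ.filter P with hBF
  have hncard : ({v : V | P v}).ncard = BF.card := by
    rw [← Set.ncard_coe_finset]
    congr 1
    ext u
    simp [hBF]
  -- choose the heavy child avoiding Λ v
  have hcex : ∀ v : V, ∃ c : V, v ∈ BF → ((c ≠ v ∧ par c = v) ∧ c ∈ H ∧ Λ v ∉ subF par c) := by
    intro v
    by_cases hv : v ∈ BF
    · obtain ⟨u₁, u₂, hne, ⟨h1v, h1p⟩, ⟨h2v, h2p⟩, hs1, hs2⟩ :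
        P v := (Finset.mem_filter.1 hv).2
      have hdisj := sibling_disjoint hroot hreach h1p h1v h2p h2v hne
      by_cases h : Λ v ∈ subF par u₁
      · refine ⟨u₂, fun _ => ⟨⟨h2v, h2p⟩, (mem_H u₂).2 hs2, ?_⟩⟩
        intro hmem
        exact (Finset.disjoint_left.1 hdisj h) hmem
      · exact ⟨u₁, fun _ => ⟨⟨h1v, h1p⟩, (mem_H u₁).2 hs1, h⟩⟩
    · exact ⟨v, fun h => absurd h hv⟩
  choose c hc using hcex
  -- vertices in BF are heavy
  have hBFheavy : ∀ v : V, v ∈ BF → v ∈ H := by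
    intro v hv
    obtain ⟨⟨hcv, hcp⟩, hcH, _⟩ := hc v hv
    have hsub : subF par (c v) ⊆ subF par v := subF_subset (mem_subF.2 ⟨1, by simpa using hcp⟩)
    have := Finset.card_le_card hsub
    rw [← subtreeCard_eq, ← subtreeCard_eq] at this
    rw [mem_H]
    calc s < (subtreeCard par (c v) : ℝ) := (mem_H _).1 hcH
      _ ≤ (subtreeCard par v : ℝ) := by exact_mod_cast this
  -- child is in the subtree of its parent
  have hcsub : ∀ v : V, v ∈ BF → subF par (c v) ⊆ subF par v := by
    intro v hv
    exact subF_subset (mem_subF.2 ⟨1, by simpa using (hc v hv).1.2⟩)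
  -- the symmetric core of injectivity
  have hsym : ∀ v v' : V, v ∈ BF → v' ∈ BF → v ≠ v' → Λ (c v) = Λ (c v') →
      c v' ∈ subF par (c v) → False := by
    intro v v' hv hv' hvv' heq hanc
    obtain ⟨⟨hcv, hcp⟩, hcH, hcavoid⟩ := hc v hv
    obtain ⟨⟨hcv', hcp'⟩, hcH', hcavoid'⟩ := hc v' hv'
    obtain ⟨m, hm⟩ := mem_subF.1 hanc
    rcases Nat.eq_zero_or_pos m with h0 | h1m
    · rw [h0] at hm
      simp only [Function.iterate_zero, id] at hm
      exact hvv' (by rw [← hcp, ← hcp', hm])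
    · -- v' is in the subtree of c v
      have hv'sub : v' ∈ subF par (c v) := by
        have h' : par^[m - 1 + 1] (c v') = c v := by
          rw [Nat.sub_add_cancel h1m]; exact hm
        rw [Function.iterate_succ_apply, hcp'] at h'
        exact mem_subF.2 ⟨m - 1, h'⟩
      -- Λ (c v) is in the subtree of v'
      have hΛin : Λ (c v) ∈ subF par v' := by
        rw [heq]
        have h1 : Λ (c v') ∈ subF par (c v') := (Finset.mem_inter.1 (hΛmem _ hcH')).2
        exact subF_subset (mem_subF.2 ⟨1, by simpa using hcp'⟩) h1
      have hveq : Λ v' = Λ (c v) :=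
        hnest v' (c v) (hBFheavy v' hv') hcH (subF_subset hv'sub) hΛin
      -- but Λ v' avoids subF par (c v')
      have : Λ v' ∈ subF par (c v') := by
        rw [hveq, heq]
        exact (Finset.mem_inter.1 (hΛmem _ hcH')).2
      exact hcavoid' this
  -- the chosen leaves have pairwise disjoint subtrees
  have hdisj : ∀ v ∈ BF, ∀ v' ∈ BF, v ≠ v' →
      Disjoint (subF par (Λ (c v))) (subF par (Λ (c v'))) := by
    intro v hv v' hv' hvv'
    have hΛne : Λ (c v) ≠ Λ (c v') := by
      intro heq
      have h1 : Λ (c v) ∈ subF par (c v) := (Finset.mem_inter.1 (hΛmem _ (hc v hv).2.1)).2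
      have h2 : Λ (c v) ∈ subF par (c v') := by
        rw [heq]; exact (Finset.mem_inter.1 (hΛmem _ (hc v' hv').2.1)).2
      rcases anc_comparable h1 h2 with h | h
      · exact hsym v' v hv' hv hvv'.symm heq.symm h
      · exact hsym v v' hv hv' hvv' heq h
    rw [Finset.disjoint_left]
    intro x hx1 hx2
    have hΛ1H : Λ (c v) ∈ H := (Finset.mem_inter.1 (hΛmem _ (hc v hv).2.1)).1
    have hΛ2H : Λ (c v') ∈ H := (Finset.mem_inter.1 (hΛmem _ (hc v' hv').2.1)).1
    rcases anc_comparable hx1 hx2 with h | h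
    · exact hΛne (hleaf _ (hc v' hv').2.1 _ hΛ1H h)
    · exact hΛne ((hleaf _ (hc v hv).2.1 _ hΛ2H h).symm)
  -- sum of subtree sizes
  have hsum : ∑ v ∈ BF, (subF par (Λ (c v))).card ≤ n := by
    rw [← Finset.card_biUnion hdisj, hn]
    exact Finset.card_le_univ _
  have hterm : ∀ v ∈ BF, s < ((subF par (Λ (c v))).card : ℝ) := by
    intro v hv
    have hΛH : Λ (c v) ∈ H := (Finset.mem_inter.1 (hΛmem _ (hc v hv).2.1)).1
    have := (mem_H _).1 hΛH
    rwa [subtreeCard_eq] at this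
  rw [hncard]
  rcases BF.eq_empty_or_nonempty with hBFe | hBFne
  · rw [hBFe]
    simp only [Finset.card_empty, Nat.cast_zero]
    apply div_pos _ hs
    exact_mod_cast Nat.lt_of_lt_of_le Nat.zero_lt_one hn1
  · rw [lt_div_iff₀ hs]
    have h1 : (BF.card : ℝ) * s < ∑ v ∈ BF, ((subF par (Λ (c v))).card : ℝ) := by
      have := Finset.sum_lt_sum_of_nonempty hBFne hterm
      simpa [mul_comm] using this
    have h2 : ∑ v ∈ BF, ((subF par (Λ (c v))).card : ℝ) ≤ (n : ℝ) := by
      rw [← Nat.cast_sum]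
      exact_mod_cast hsum
    linarith
end

section
/- Assume the marked-vertex setup with parameters δ ≥ 1 and k ≥ 1. If u and v are marked vertices and there exist integers a, b ≥ 0 with a + b ≤ k and par^[a](u) = par^[b](v), then one of u, v is an ancestor of the other and all vertices between them are marked: there exists m ≤ a + b such that either par^[m](u) = v and par^[j](u) is marked for every 0 ≤ j ≤ m, or par^[m](v) = u and par^[j](v) is marked for every 0 ≤ j ≤ m. -/
open Function

/-- `Marked δ k par p v`: there is a period `r` with `1 ≤ r ≤ k` such that the
color sequence `c(v)(i) = p(par^[i](v))` satisfies `c(v)(i) = c(v)(i + r)` for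
every `i ≥ 0` with `i + r < 9k`. -/
def Marked {V : Type*} (δ k : ℕ) (par : V → V) (p : V → Fin δ) (v : V) : Prop :=
  ∃ r : ℕ, 1 ≤ r ∧ r ≤ k ∧ ∀ i : ℕ, i + r < 9 * k → p (par^[i] v) = p (par^[i + r] v)

/-!
Write `c(v)` for the color sequence of `v`, let `r, s` be periods witnessing that `u, v` are
marked, and assume `b ≤ a`. The colors above the meeting point form a common tail of `c(u)`
and `c(v)` with both periods `r` and `s`, hence, by the Fine–Wilf argument, with period
`g = gcd r s`. Since `r` is a period of all of `c(u)`, the period `g` propagates down from the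
tail to an initial window of `c(u)`, and likewise for `c(v)`. Two `g`-periodic sequences that
agree from some point on agree everywhere, so `c(par^[a - b] u) = c(v)`. As siblings have
distinct ports, vertices with the same parent and the same color coincide, and descending from
the meeting point gives `par^[a - b] u = v`. Finally `s` is a period of `c(u)` on the window
`[0, 9k + a - b)`: below `a - b` because `g ∣ s`, above it because `c(u)` continues as `c(v)`.
This makes every vertex between `u` and `v` marked.
-/

def HasPeriodOn {α : Type*} (f : ℕ → α) (r L : ℕ) : Prop :=
  ∀ i, i + r < L → f i = f (i + r)

namespace HasPeriodOn

variable {α : Type*} {f : ℕ → α} {r s L : ℕ}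

theorem mono {M : ℕ} (h : HasPeriodOn f r L) (hML : M ≤ L) : HasPeriodOn f r M :=
  fun i hi => h i (by omega)

theorem comp_add (h : HasPeriodOn f r L) (a : ℕ) :
    HasPeriodOn (fun i => f (a + i)) r (L - a) := fun i hi => by
  simpa only [Nat.add_assoc] using h (a + i) (by omega)

theorem mul (h : HasPeriodOn f r L) (t : ℕ) : HasPeriodOn f (r * t) L := by
  induction t with
  | zero => simp [HasPeriodOn]
  | succ t ih =>
    intro i hi
    rw [Nat.mul_succ] at hi ⊢
    rw [ih i (by omega), h (i + r * t) (by omega), Nat.add_assoc]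

theorem of_dvd (h : HasPeriodOn f r L) (hrs : r ∣ s) : HasPeriodOn f s L := by
  obtain ⟨t, rfl⟩ := hrs
  exact h.mul t

theorem sub (hr : HasPeriodOn f r L) (hs : HasPeriodOn f s L) (hrs : r ≤ s) :
    HasPeriodOn f (s - r) (L - r) := fun i hi => by
  rw [hs i (by omega), hr (i + (s - r)) (by omega), Nat.add_assoc, Nat.sub_add_cancel hrs]

/-- A non-sharp form of the Fine–Wilf theorem. -/
theorem gcd (hr : HasPeriodOn f r L) (hs : HasPeriodOn f s L) (hr0 : 0 < r) (hs0 : 0 < s) :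
    HasPeriodOn f (Nat.gcd r s) (L - r - s) := by
  induction hn : r + s using Nat.strong_induction_on generalizing r s L with
  | _ n ih =>
  rcases lt_trichotomy r s with hrs | rfl | hrs
  · have h := ih (r + (s - r)) (by omega) (hr.mono (Nat.sub_le L r)) (hr.sub hs hrs.le)
      hr0 (by omega) rfl
    rw [Nat.gcd_sub_self_right hrs.le] at h
    exact h.mono (by omega)
  · rw [Nat.gcd_self]
    exact hr.mono (by omega)
  · have h := ih (s + (r - s)) (by omega) (hs.mono (Nat.sub_le L s)) (hs.sub hr hrs.le)
      hs0 (by omega) rfl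
    rw [Nat.gcd_sub_self_right hrs.le, Nat.gcd_comm] at h
    exact h.mono (by omega)

/-- A period `g` of a tail `f (a + ·)` extends down to `f`, using a period `r` of `f`:
`f i = f (i + r) = f (i + r + g) = f (i + g)`. -/
theorem of_tail {g a M : ℕ} (hr : HasPeriodOn f r L) (hr0 : 0 < r)
    (htail : HasPeriodOn (fun i => f (a + i)) g (M - a)) (hM : a + r + g ≤ M) (hML : M ≤ L) :
    HasPeriodOn f g M := by
  intro i
  induction hn : a - i using Nat.strong_induction_on generalizing i with
  | _ n ih =>
  intro hi
  by_cases hai : a ≤ i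
  · have h : f (a + (i - a)) = f (a + (i - a + g)) := htail (i - a) (by omega)
    rwa [← Nat.add_assoc, Nat.add_sub_cancel' hai] at h
  · rw [hr i (by omega), ih (a - (i + r)) (by omega) (i + r) rfl (by omega),
      Nat.add_right_comm, ← hr (i + g) (by omega)]

theorem of_head_tail {d M : ℕ} (hhead : HasPeriodOn f r M)
    (htail : HasPeriodOn (fun i => f (d + i)) r L) (hM : d + r ≤ M) :
    HasPeriodOn f r (d + L) := by
  intro i hi
  by_cases hdi : d ≤ i
  · have h : f (d + (i - d)) = f (d + (i - d + r)) := htail (i - d) (by omega)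
    rwa [← Nat.add_assoc, Nat.add_sub_cancel' hdi] at h
  · exact hhead i (by omega)

theorem eq_of_eqOn_Ici {f₁ f₂ : ℕ → α} {g M b : ℕ} (h₁ : HasPeriodOn f₁ g M)
    (h₂ : HasPeriodOn f₂ g M) (hg : 0 < g) (htail : Set.EqOn f₁ f₂ (Set.Ici b))
    (hb : b + g ≤ M) : f₁ = f₂ := by
  funext i
  induction hn : b - i using Nat.strong_induction_on generalizing i with
  | _ n ih =>
  by_cases hbi : b ≤ i
  · exact htail hbi
  · rw [h₁ i (by omega), h₂ i (by omega), ih (b - (i + g)) (by omega) (i + g) rfl]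

end HasPeriodOn

section ColorSeq

variable {V C : Type*} (par : V → V) (p : V → C)

def colorSeq (v : V) (i : ℕ) : C :=
  p (par^[i] v)

variable {par p}

theorem colorSeq_iterate (j : ℕ) (v : V) :
    colorSeq par p (par^[j] v) = fun i => colorSeq par p v (j + i) := by
  funext i
  simp only [colorSeq, ← iterate_add_apply, Nat.add_comm]

theorem colorSeq_eq_of_iterate_eq {a b : ℕ} {u v : V} (hmeet : par^[a] u = par^[b] v) (i : ℕ) :
    colorSeq par p u (a + i) = colorSeq par p v (b + i) := by
  simp only [colorSeq, Nat.add_comm _ i, iterate_add_apply, hmeet]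

theorem eq_of_iterate_eq_of_colorSeq_eq (hport : ∀ u v : V, u ≠ v → par u = par v → p u ≠ p v)
    {n : ℕ} {x y : V} (hn : par^[n] x = par^[n] y)
    (hc : ∀ i < n, colorSeq par p x i = colorSeq par p y i) : x = y := by
  induction n generalizing x y with
  | zero => exact hn
  | succ n ih =>
    have hpar : par x = par y := by
      refine ih (by simpa only [iterate_succ_apply] using hn) fun i hi => ?_
      simpa only [colorSeq, iterate_succ_apply] using hc (i + 1) (by omega)
    by_contra hne
    exact hport x y hne hpar (hc 0 (Nat.succ_pos n))

end ColorSeq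

section Marked

variable {V : Type*} {par : V → V} {k a b : ℕ} {u v : V}

theorem marked_iff {δ : ℕ} {p : V → Fin δ} :
    Marked δ k par p v ↔ ∃ r, 1 ≤ r ∧ r ≤ k ∧ HasPeriodOn (colorSeq par p v) r (9 * k) :=
  Iff.rfl

theorem hasPeriodOn_gcd_of_iterate_eq {C : Type*} {p : V → C} {r s : ℕ}
    (hu : HasPeriodOn (colorSeq par p u) r (9 * k))
    (hv : HasPeriodOn (colorSeq par p v) s (9 * k)) (hr0 : 0 < r) (hs0 : 0 < s)
    (hrk : r ≤ k) (hsk : s ≤ k) (hak : a ≤ k) (hbk : b ≤ k) (hmeet : par^[a] u = par^[b] v) :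
    HasPeriodOn (colorSeq par p u) (Nat.gcd r s) (3 * k) := by
  have htail := funext (colorSeq_eq_of_iterate_eq (p := p) hmeet)
  have hr' : HasPeriodOn (fun i => colorSeq par p u (a + i)) r (8 * k) :=
    (hu.comp_add a).mono (by omega)
  have hs' : HasPeriodOn (fun i => colorSeq par p u (a + i)) s (8 * k) := by
    rw [htail]
    exact (hv.comp_add b).mono (by omega)
  have hgr : Nat.gcd r s ≤ r := Nat.gcd_le_left s hr0
  exact hu.of_tail hr0 ((hr'.gcd hs' hr0 hs0).mono (by omega)) (by omega) (by omega)

theorem iterate_eq_and_marked_of_iterate_eq {δ : ℕ} {p : V → Fin δ}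
    (hport : ∀ u v : V, u ≠ v → par u = par v → p u ≠ p v)
    (hu : Marked δ k par p u) (hv : Marked δ k par p v)
    (hba : b ≤ a) (hab : a + b ≤ k) (hmeet : par^[a] u = par^[b] v) :
    par^[a - b] u = v ∧ ∀ j ≤ a - b, Marked δ k par p (par^[j] u) := by
  obtain ⟨r, hr0, hrk, hr⟩ := marked_iff.mp hu
  obtain ⟨s, hs0, hsk, hs⟩ := marked_iff.mp hv
  set g := Nat.gcd r s
  have hg0 : 0 < g := Nat.gcd_pos_of_pos_left s hr0
  have hgs : g ≤ s := Nat.gcd_le_right r hs0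
  have hug : HasPeriodOn (colorSeq par p u) g (3 * k) :=
    hasPeriodOn_gcd_of_iterate_eq hr hs hr0 hs0 hrk hsk (by omega) (by omega) hmeet
  have hvg : HasPeriodOn (colorSeq par p v) g (3 * k) := by
    rw [show g = Nat.gcd s r from Nat.gcd_comm r s]
    exact hasPeriodOn_gcd_of_iterate_eq hs hr hs0 hr0 hsk hrk (by omega) (by omega) hmeet.symm
  have hcol : colorSeq par p (par^[a - b] u) = colorSeq par p v := by
    rw [colorSeq_iterate]
    refine (hug.comp_add (a - b)).eq_of_eqOn_Ici (hvg.mono (Nat.sub_le _ _)) hg0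
      (b := b) (fun i (hbi : b ≤ i) => ?_) (by omega)
    rw [show a - b + i = a + (i - b) by omega]
    simpa only [Nat.add_sub_cancel' hbi] using colorSeq_eq_of_iterate_eq (p := p) hmeet (i - b)
  have hroot : par^[a - b] u = v := by
    refine eq_of_iterate_eq_of_colorSeq_eq hport (n := b) ?_ fun i _ => congrFun hcol i
    rw [← iterate_add_apply, Nat.add_sub_cancel' hba, hmeet]
  have hus : HasPeriodOn (colorSeq par p u) s (a - b + 9 * k) := by
    refine (hug.of_dvd (Nat.gcd_dvd_right r s)).of_head_tail ?_ (by omega)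
    rw [← colorSeq_iterate, hcol]
    exact hs
  refine ⟨hroot, fun j hj => marked_iff.mpr ⟨s, hs0, hsk, ?_⟩⟩
  rw [colorSeq_iterate]
  exact (hus.comp_add j).mono (by omega)

end Marked

theorem stmt13_general {V : Type*} (δ k : ℕ)
    (par : V → V) (p : V → Fin δ)
    (hport : ∀ u v : V, u ≠ v → par u = par v → p u ≠ p v)
    (u v : V) (hu : Marked δ k par p u) (hv : Marked δ k par p v)
    (a b : ℕ) (hab : a + b ≤ k) (hmeet : par^[a] u = par^[b] v) :
    ∃ m : ℕ, m ≤ a + b ∧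
      ((par^[m] u = v ∧ ∀ j ≤ m, Marked δ k par p (par^[j] u)) ∨
       (par^[m] v = u ∧ ∀ j ≤ m, Marked δ k par p (par^[j] v))) := by
  rcases le_total b a with hba | hab'
  · exact ⟨a - b, by omega,
      Or.inl (iterate_eq_and_marked_of_iterate_eq hport hu hv hba hab hmeet)⟩
  · exact ⟨b - a, by omega,
      Or.inr (iterate_eq_and_marked_of_iterate_eq hport hv hu hab' (by omega) hmeet.symm)⟩

/-- in the marked-vertex setup, if `u` and `v` are marked and
`par^[a](u) = par^[b](v)` for some `a, b ≥ 0` with `a + b ≤ k`, then one of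
`u, v` is an ancestor of the other and all vertices between them are marked. -/
theorem stmt13 {V : Type*} (δ k : ℕ) (hδ : 1 ≤ δ) (hk : 1 ≤ k)
    (par : V → V) (p : V → Fin δ)
    (hacyc : ∀ v : V, ∀ n : ℕ, 1 ≤ n → par^[n] v ≠ v)
    (hport : ∀ u v : V, u ≠ v → par u = par v → p u ≠ p v)
    (u v : V) (hu : Marked δ k par p u) (hv : Marked δ k par p v)
    (a b : ℕ) (hab : a + b ≤ k) (hmeet : par^[a] u = par^[b] v) :
    ∃ m : ℕ, m ≤ a + b ∧
      ((par^[m] u = v ∧ ∀ j ≤ m, Marked δ k par p (par^[j] u)) ∨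
       (par^[m] v = u ∧ ∀ j ≤ m, Marked δ k par p (par^[j] v))) :=
  stmt13_general δ k par p hport u v hu hv a b hab hmeet
end

section
/- Assume the marked-vertex setup with parameters δ ≥ 1 and k ≥ 1. Suppose u ≠ v are vertices with c(u)(i) = c(v)(i) for every 0 ≤ i < 10k, and there exist integers a, b ≥ 0 with a + b < k and par^[a](u) = par^[b](v). Then there exist j_1 ≤ a and j_2 ≤ b with par^[j_1](u) = par^[j_2](v) such that this common ancestor is marked. -/
open Function

lemma aux_marked {V : Type*} {δ k : ℕ} (par : V → V) (p : V → Fin δ)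
    (u v : V)
    (hcol : ∀ i : ℕ, i < 10 * k → p (par^[i] u) = p (par^[i] v))
    (a b : ℕ) (hab : a + b < k) (hlt : a < b) (hmeet : par^[a] u = par^[b] v) :
    Marked δ k par p (par^[a] u) := by
  refine ⟨b - a, by omega, by omega, ?_⟩
  intro i hi
  have e1 : par^[i] (par^[a] u) = par^[i + a] u :=
    (Function.iterate_add_apply par i a u).symm
  have e2 : par^[i + (b - a)] (par^[a] u) = par^[i + b] u := by
    rw [← Function.iterate_add_apply]; congr 1; omega
  rw [e1, e2]
  have h1 : par^[i + a] u = par^[i + b] v := by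
    have h : par^[i + a] u = par^[i] (par^[a] u) :=
      Function.iterate_add_apply par i a u
    rw [h, hmeet, ← Function.iterate_add_apply]
  rw [h1]
  exact (hcol (i + b) (by omega)).symm

/-- in the marked-vertex setup, if `u ≠ v` have the same color
sequence up to index `10k` and `par^[a](u) = par^[b](v)` with `a + b < k`, then
some common ancestor `par^[j₁](u) = par^[j₂](v)` with `j₁ ≤ a`, `j₂ ≤ b` is
marked. -/
theorem stmt14 {V : Type*} (δ k : ℕ) (hδ : 1 ≤ δ) (hk : 1 ≤ k)
    (par : V → V) (p : V → Fin δ)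
    (hacyc : ∀ v : V, ∀ n : ℕ, 1 ≤ n → par^[n] v ≠ v)
    (hport : ∀ u v : V, u ≠ v → par u = par v → p u ≠ p v)
    (u v : V) (huv : u ≠ v)
    (hcol : ∀ i : ℕ, i < 10 * k → p (par^[i] u) = p (par^[i] v))
    (a b : ℕ) (hab : a + b < k) (hmeet : par^[a] u = par^[b] v) :
    ∃ j₁ ≤ a, ∃ j₂ ≤ b, par^[j₁] u = par^[j₂] v ∧
      Marked δ k par p (par^[j₁] u) := by
  rcases lt_trichotomy a b with h | h | h
  · exact ⟨a, le_rfl, b, le_rfl, hmeet,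
      aux_marked par p u v hcol a b hab h hmeet⟩
  · -- a = b : contradiction
    exfalso
    classical
    subst h
    have hP : ∃ m : ℕ, par^[m] u = par^[m] v := ⟨a, hmeet⟩
    set m := Nat.find hP with hm
    have hmspec : par^[m] u = par^[m] v := Nat.find_spec hP
    have hm1 : 1 ≤ m := by
      rcases Nat.eq_zero_or_pos m with h0 | h0
      · exfalso; apply huv; simpa [h0] using hmspec
      · exact h0
    have hmin : par^[m - 1] u ≠ par^[m - 1] v := Nat.find_min hP (by omega)
    have hma : m ≤ a := Nat.find_min' hP hmeet
    have hpar : par (par^[m - 1] u) = par (par^[m - 1] v) := by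
      have hm' : m = (m - 1) + 1 := by omega
      have h1 : par (par^[m - 1] u) = par^[m] u := by
        conv_rhs => rw [hm', Function.iterate_succ_apply']
      have h2 : par (par^[m - 1] v) = par^[m] v := by
        conv_rhs => rw [hm', Function.iterate_succ_apply']
      rw [h1, h2, hmspec]
    exact hport _ _ hmin hpar (hcol (m - 1) (by omega))
  · have hcol' : ∀ i : ℕ, i < 10 * k → p (par^[i] v) = p (par^[i] u) :=
      fun i hi => (hcol i hi).symm
    have hM := aux_marked par p v u hcol' b a (by omega) h hmeet.symm
    exact ⟨a, le_rfl, b, le_rfl, hmeet, by rwa [hmeet]⟩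
end
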